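/- arXiv:1706.02006 — 12 statements merged into one kernel-verified Lean document; each statement's English description precedes it below -/
import Mathlib

section
/- Let (X,τ) be a locally solid vector lattice. For a solid τ-neighborhood V of zero and w ∈ X_+ with w ≠ 0, set U_{V,w} := {x ∈ X : |x| ∧ w ∈ V}. Then the collection of all such sets U_{V,w} forms a neighborhood base at zero of a locally solid linear topology on X (the uτ-topology). -/
/-- A subset of a lattice-ordered group is solid if it contains, along with every
element, all elements of smaller absolute value. -/
def IsSolid {X : Type*} [Lattice X] [AddCommGroup X] (S : Set X) : Prop :=
  ∀ ⦃x y : X⦄, |x| ≤ |y| → y ∈ S → x ∈ S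

open Filter Set Topology

private instance swapCov {X : Type*} [Lattice X] [AddCommGroup X]
    [CovariantClass X X (· + ·) (· ≤ ·)] :
    CovariantClass X X (Function.swap (· + ·)) (· ≤ ·) :=
  ⟨fun a b c h => by
    simpa only [Function.swap, add_comm] using add_le_add_left h a⟩

section Helpers
variable {X : Type*} [Lattice X] [AddCommGroup X] [Module ℝ X]
    [CovariantClass X X (· + ·) (· ≤ ·)] [PosSMulMono ℝ X]

private lemma my_smul_inf (t : ℝ) (ht : 0 < t) (a b : X) : t • (a ⊓ b) = (t • a) ⊓ (t • b) := by
  refine le_antisymm (le_inf (smul_le_smul_of_nonneg_left inf_le_left ht.le)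
    (smul_le_smul_of_nonneg_left inf_le_right ht.le)) ?_
  have h : t⁻¹ • ((t • a) ⊓ (t • b)) ≤ a ⊓ b := by
    refine le_inf ?_ ?_
    · calc t⁻¹ • ((t • a) ⊓ (t • b)) ≤ t⁻¹ • (t • a) :=
        smul_le_smul_of_nonneg_left inf_le_left (by positivity)
      _ = a := inv_smul_smul₀ ht.ne' a
    · calc t⁻¹ • ((t • a) ⊓ (t • b)) ≤ t⁻¹ • (t • b) :=
        smul_le_smul_of_nonneg_left inf_le_right (by positivity)
      _ = b := inv_smul_smul₀ ht.ne' b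
  calc (t • a) ⊓ (t • b) = t • (t⁻¹ • ((t • a) ⊓ (t • b))) := (smul_inv_smul₀ ht.ne' _).symm
  _ ≤ t • (a ⊓ b) := smul_le_smul_of_nonneg_left h ht.le

private lemma my_scale_smul_le {c t : ℝ} (hct : c ≤ t) {x : X} (hx : 0 ≤ x) :
    c • x ≤ t • x := by
  have : 0 ≤ (t - c) • x := smul_nonneg (by linarith) hx
  calc c • x ≤ c • x + (t - c) • x := le_add_of_nonneg_right this
  _ = t • x := by rw [← add_smul]; ring_nf

private lemma my_abs_smul_le {c t : ℝ} (h : |c| ≤ t) (x : X) : |c • x| ≤ t • |x| := by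
  have key : ∀ d : ℝ, |d| ≤ t → d • x ≤ t • |x| := by
    intro d hd
    rcases le_or_gt 0 d with h0 | h0
    · calc d • x ≤ d • |x| := smul_le_smul_of_nonneg_left (le_abs_self x) h0
      _ ≤ t • |x| := my_scale_smul_le ((le_abs_self d).trans hd) (abs_nonneg x)
    · calc d • x = (-d) • (-x) := by rw [neg_smul_neg]
      _ ≤ (-d) • |x| := smul_le_smul_of_nonneg_left (neg_le_abs x) (by linarith)
      _ ≤ t • |x| := my_scale_smul_le ((neg_le_abs d).trans hd) (abs_nonneg x)
  refine abs_le'.2 ⟨key c h, ?_⟩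
  rw [← neg_smul]
  exact key (-c) (by rwa [abs_neg])

private lemma my_inf_smul_le {t : ℝ} (ht : 1 ≤ t) {a w : X} (hw : 0 ≤ w) :
    (t • a) ⊓ w ≤ t • (a ⊓ w) := by
  rw [my_smul_inf t (lt_of_lt_of_le one_pos ht)]
  exact inf_le_inf_left _ (by simpa using my_scale_smul_le ht hw)

private lemma my_add_inf_le {a b w : X} (ha : 0 ≤ a) (hb : 0 ≤ b) (hw : 0 ≤ w) :
    (a + b) ⊓ w ≤ (a ⊓ w) + (b ⊓ w) := by
  have : (a ⊓ w) + (b ⊓ w) = ((a + b) ⊓ (a + w)) ⊓ ((w + b) ⊓ (w + w)) := by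
    rw [inf_add, add_inf, add_inf]
  rw [this]
  refine le_inf (le_inf inf_le_left ?_) (le_inf ?_ ?_)
  · exact inf_le_right.trans (le_add_of_nonneg_left ha)
  · exact inf_le_right.trans (le_add_of_nonneg_right hb)
  · exact inf_le_right.trans (le_add_of_nonneg_left hw)

end Helpers

section Main
variable {X : Type*} [Lattice X] [AddCommGroup X] [Module ℝ X]
    [CovariantClass X X (· + ·) (· ≤ ·)] [PosSMulMono ℝ X] [Nontrivial X]
    [TopologicalSpace X] [IsTopologicalAddGroup X] [ContinuousSMul ℝ X]

/-- The collection of sets U_{V,w}. -/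
private def uSets (X : Type*) [Lattice X] [AddCommGroup X] [TopologicalSpace X] :
    Set (Set X) :=
  {U | ∃ V w, V ∈ nhds (0 : X) ∧ IsSolid V ∧ 0 ≤ w ∧ w ≠ 0 ∧ U = {x : X | |x| ⊓ w ∈ V}}

private lemma inf_nonneg' {a w : X} (ha : 0 ≤ a) (hw : 0 ≤ w) : 0 ≤ a ⊓ w := le_inf ha hw

private lemma uMem {V : Set X} (hVs : IsSolid V) {w : X} (hw : 0 ≤ w) {a : X}
    (ha : 0 ≤ a) (haV : a ∈ V) {x : X} (hx : |x| ⊓ w ≤ a) : x ∈ {x : X | |x| ⊓ w ∈ V} := by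
  refine hVs ?_ haV
  rwa [abs_of_nonneg (inf_nonneg' (abs_nonneg x) hw), abs_of_nonneg ha]

private lemma uSolid {U : Set X} (hU : U ∈ uSets X) : IsSolid U := by
  obtain ⟨V, w, hV, hVs, hw, hwne, rfl⟩ := hU
  intro x y hxy hy
  exact uMem hVs hw (inf_nonneg' (abs_nonneg y) hw) hy (inf_le_inf_right w hxy)

variable (hsolid : ∀ S ∈ nhds (0 : X), ∃ V ∈ nhds (0 : X), IsSolid V ∧ V ⊆ S)

/-- The module filter basis generating the uτ-topology. -/
private def uBasis : ModuleFilterBasis ℝ X where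
  sets := uSets X
  nonempty := by
    obtain ⟨V, hV, hVs, -⟩ := hsolid univ univ_mem
    obtain ⟨z, hz⟩ := exists_ne (0 : X)
    exact ⟨_, V, |z|, hV, hVs, abs_nonneg z, fun h => hz (le_antisymm (h ▸ le_abs_self z)
          (neg_nonpos.1 (h ▸ neg_le_abs z))), rfl⟩
  inter_sets := by
    rintro U₁ U₂ ⟨V₁, w₁, hV₁, hV₁s, hw₁, hw₁ne, rfl⟩ ⟨V₂, w₂, hV₂, hV₂s, hw₂, hw₂ne, rfl⟩
    obtain ⟨V, hV, hVs, hVsub⟩ := hsolid (V₁ ∩ V₂) (inter_mem hV₁ hV₂)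
    have hw : (0 : X) ≤ w₁ ⊔ w₂ := hw₁.trans le_sup_left
    refine ⟨_, ⟨V, w₁ ⊔ w₂, hV, hVs, hw, ?_, rfl⟩, ?_⟩
    · rintro h
      exact hw₁ne (le_antisymm (h ▸ le_sup_left) hw₁)
    · rintro x hx
      have hx' : |x| ⊓ (w₁ ⊔ w₂) ∈ V₁ ∩ V₂ := hVsub hx
      constructor
      · exact uMem hV₁s hw₁ (inf_nonneg' (abs_nonneg x) hw) hx'.1
          (inf_le_inf_left _ le_sup_left)
      · exact uMem hV₂s hw₂ (inf_nonneg' (abs_nonneg x) hw) hx'.2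
          (inf_le_inf_left _ le_sup_right)
  zero' := by
    rintro U ⟨V, w, hV, hVs, hw, hwne, rfl⟩
    show |(0 : X)| ⊓ w ∈ V
    rw [abs_zero, inf_eq_left.2 hw]
    exact mem_of_mem_nhds hV
  add' := by
    rintro U ⟨V, w, hV, hVs, hw, hwne, rfl⟩
    obtain ⟨W, hWo, hW0, hWadd⟩ := exists_open_nhds_zero_add_subset hV
    obtain ⟨W', hW', hW's, hW'sub⟩ := hsolid W (hWo.mem_nhds hW0)
    refine ⟨_, ⟨W', w, hW', hW's, hw, hwne, rfl⟩, ?_⟩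
    rintro z ⟨x, hx, y, hy, rfl⟩
    have hsum : (|x| ⊓ w) + (|y| ⊓ w) ∈ V :=
      hWadd (add_mem_add (hW'sub hx) (hW'sub hy))
    refine uMem hVs hw ?_ hsum ?_
    · exact add_nonneg (inf_nonneg' (abs_nonneg x) hw) (inf_nonneg' (abs_nonneg y) hw)
    · calc |x + y| ⊓ w ≤ (|x| + |y|) ⊓ w := inf_le_inf_right w (abs_add_le x y)
        _ ≤ (|x| ⊓ w) + (|y| ⊓ w) := my_add_inf_le (abs_nonneg x) (abs_nonneg y) hw
  neg' := by
    rintro U ⟨V, w, hV, hVs, hw, hwne, rfl⟩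
    refine ⟨_, ⟨V, w, hV, hVs, hw, hwne, rfl⟩, ?_⟩
    intro x hx
    show |(-x)| ⊓ w ∈ V
    rwa [abs_neg]
  conj' := by
    rintro x₀ U ⟨V, w, hV, hVs, hw, hwne, rfl⟩
    refine ⟨_, ⟨V, w, hV, hVs, hw, hwne, rfl⟩, ?_⟩
    intro x hx
    show |x₀ + x + -x₀| ⊓ w ∈ V
    have : x₀ + x + -x₀ = x := by abel
    rwa [this]
  smul' := by
    rintro U ⟨V, w, hV, hVs, hw, hwne, rfl⟩
    refine ⟨Metric.closedBall (0 : ℝ) 1, Metric.closedBall_mem_nhds 0 one_pos,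
      _, ⟨V, w, hV, hVs, hw, hwne, rfl⟩, ?_⟩
    rintro z ⟨c, hc, x, hx, rfl⟩
    have hc1 : |c| ≤ 1 := by
      simpa [Real.dist_eq] using Metric.mem_closedBall.1 hc
    have habs : |c • x| ≤ |x| := by simpa using my_abs_smul_le hc1 x
    exact uMem hVs hw (inf_nonneg' (abs_nonneg x) hw) hx
      (le_trans (inf_le_inf_right w habs) le_rfl)
  smul_left' := by
    rintro c U ⟨V, w, hV, hVs, hw, hwne, rfl⟩
    set t : ℝ := max |c| 1 with ht
    have ht1 : 1 ≤ t := le_max_right _ _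
    have htend : Filter.Tendsto (fun x : X => t • x) (nhds 0) (nhds 0) := by
      simpa using (continuous_const_smul t).tendsto (0 : X)
    have hV₁ : (fun x : X => t • x) ⁻¹' V ∈ nhds (0 : X) := htend hV
    obtain ⟨V₂, hV₂, hV₂s, hV₂sub⟩ := hsolid _ hV₁
    refine ⟨_, ⟨V₂, w, hV₂, hV₂s, hw, hwne, rfl⟩, ?_⟩
    intro x hx
    have h1 : t • (|x| ⊓ w) ∈ V := hV₂sub hx
    refine uMem hVs hw (smul_nonneg (by positivity) (inf_nonneg' (abs_nonneg x) hw)) h1 ?_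
    calc |c • x| ⊓ w ≤ (t • |x|) ⊓ w :=
        inf_le_inf_right w (my_abs_smul_le (le_max_left _ _) x)
      _ ≤ t • (|x| ⊓ w) := my_inf_smul_le ht1 hw
  smul_right' := by
    rintro m₀ U ⟨V, w, hV, hVs, hw, hwne, rfl⟩
    have htend : Filter.Tendsto (fun c : ℝ => c • m₀) (nhds 0) (nhds 0) := by
      simpa using ((show Continuous fun c : ℝ => c • m₀ from
        continuous_id.smul continuous_const)).tendsto (0 : ℝ)
    filter_upwards [htend hV] with c hc
    have habs : |c • m₀| ∈ V := hVs (by rw [abs_abs]) hc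
    exact uMem hVs hw (abs_nonneg (c • m₀)) habs inf_le_left
end Main

theorem stmt2 {X : Type*} [Lattice X] [AddCommGroup X] [Module ℝ X]
    [CovariantClass X X (· + ·) (· ≤ ·)] [PosSMulMono ℝ X] [Nontrivial X]
    [TopologicalSpace X] [IsTopologicalAddGroup X] [ContinuousSMul ℝ X]
    -- (X, τ) is locally solid: solid sets form a neighborhood base at zero
    (hsolid : ∀ S ∈ nhds (0 : X), ∃ V ∈ nhds (0 : X), IsSolid V ∧ V ⊆ S) :
    -- there is a locally solid linear topology whose neighborhoods of zero are
    -- exactly the supersets of the sets U_{V,w} = {x : |x| ⊓ w ∈ V}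
    ∃ τ' : TopologicalSpace X,
      @IsTopologicalAddGroup X τ' _ ∧ @ContinuousSMul ℝ X _ _ τ' ∧
      (∀ S : Set X, S ∈ @nhds X τ' 0 ↔
        ∃ (V : Set X) (w : X), V ∈ nhds (0 : X) ∧ IsSolid V ∧ 0 ≤ w ∧ w ≠ 0 ∧
          {x : X | |x| ⊓ w ∈ V} ⊆ S) ∧
      (∀ S ∈ @nhds X τ' 0, ∃ V ∈ @nhds X τ' 0, IsSolid V ∧ V ⊆ S) := by
  set B := uBasis hsolid with hB
  refine ⟨B.topology, B.toAddGroupFilterBasis.isTopologicalAddGroup, B.continuousSMul, ?_, ?_⟩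
  · intro S
    rw [B.toAddGroupFilterBasis.nhds_zero_hasBasis.mem_iff]
    constructor
    · rintro ⟨U, hU, hsub⟩
      obtain ⟨V, w, hV, hVs, hw, hwne, rfl⟩ := hU
      refine ⟨{x : X | |x| ⊓ w ∈ V}, w,
        B.toAddGroupFilterBasis.mem_nhds_zero ⟨V, w, hV, hVs, hw, hwne, rfl⟩,
        uSolid ⟨V, w, hV, hVs, hw, hwne, rfl⟩, hw, hwne, fun x hx => ?_⟩
      refine hsub ?_
      have : (|x| ⊓ w) ⊓ w = |x| ⊓ w := by rw [inf_assoc, inf_idem]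
      show |x| ⊓ w ∈ V
      have hx' : |(|x| ⊓ w)| ⊓ w ∈ V := hx
      rwa [abs_of_nonneg (inf_nonneg' (abs_nonneg x) hw), this] at hx'
    · rintro ⟨V, w, hV, hVs, hw, hwne, hsub⟩
      rw [B.toAddGroupFilterBasis.nhds_zero_hasBasis.mem_iff] at hV
      obtain ⟨U₀, hU₀, hU₀sub⟩ := hV
      obtain ⟨V₀, w₀, hV₀, hV₀s, hw₀, hw₀ne, rfl⟩ := hU₀
      refine ⟨_, ⟨V₀, w₀, hV₀, hV₀s, hw₀, hw₀ne, rfl⟩, fun x hx => ?_⟩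
      refine hsub ?_
      show |x| ⊓ w ∈ V
      refine hU₀sub (uMem hV₀s hw₀ (inf_nonneg' (abs_nonneg x) hw₀) hx ?_)
      rw [abs_of_nonneg (inf_nonneg' (abs_nonneg x) hw)]
      exact inf_le_inf_right w₀ inf_le_left
  · intro S hS
    rw [B.toAddGroupFilterBasis.nhds_zero_hasBasis.mem_iff] at hS
    obtain ⟨U, hU, hsub⟩ := hS
    exact ⟨U, B.toAddGroupFilterBasis.mem_nhds_zero hU, uSolid hU, hsub⟩
end

section
/- Let (X,τ) be a locally solid vector lattice with topology generated by Riesz pseudonorms {ρ_j}. For every ε > 0, index j, and 0 ≠ w ∈ X_+, the set V = {x ∈ X : ρ_j(|x| ∧ w) < ε} either is contained in the order interval [−w,w] or contains a nontrivial ideal of X. -/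
section Aux
variable {X : Type*} [Lattice X] [AddCommGroup X]
  [CovariantClass X X (· + ·) (· ≤ ·)]

lemma aux_add_inf_le {a b c : X} (ha : 0 ≤ a) (hb : 0 ≤ b) (hc : 0 ≤ c) :
    (a + b) ⊓ c ≤ a ⊓ c + b ⊓ c := by
  rw [add_inf, inf_add, inf_add]
  refine le_inf (le_inf ?_ ?_) (le_inf ?_ ?_)
  · exact inf_le_left
  · exact inf_le_right.trans (le_add_of_nonneg_right hb)
  · exact inf_le_right.trans (le_add_of_nonneg_left ha)
  · exact inf_le_right.trans (le_add_of_nonneg_left hc)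

lemma aux_nsmul_disj {u v : X} (hu : 0 ≤ u) (hv : 0 ≤ v) (h : u ⊓ v = 0) :
    ∀ n : ℕ, (n • u) ⊓ v = 0 := by
  intro n
  induction n with
  | zero => simp [inf_eq_left.mpr hv]
  | succ n ih =>
      refine le_antisymm ?_ (le_inf (nsmul_nonneg hu _) hv)
      calc ((n + 1) • u) ⊓ v ≤ (n • u) ⊓ v + u ⊓ v := by
            rw [succ_nsmul]
            exact aux_add_inf_le (nsmul_nonneg hu n) hu hv
        _ = 0 := by rw [ih, h, add_zero]

variable [Module ℝ X] [PosSMulMono ℝ X]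

lemma aux_abs_smul (c : ℝ) (a : X) : |c • a| ≤ |c| • |a| := by
  rcases le_or_gt 0 c with hc | hc
  · rw [abs_of_nonneg hc]
    refine abs_le'.mpr ⟨?_, ?_⟩
    · exact smul_le_smul_of_nonneg_left (le_abs_self a) hc
    · rw [← smul_neg]
      exact smul_le_smul_of_nonneg_left (neg_le_abs a) hc
  · rw [abs_of_neg hc]
    have h1 : c • a = (-c) • (-a) := by rw [neg_smul, smul_neg, neg_neg]
    refine abs_le'.mpr ⟨?_, ?_⟩
    · rw [h1]
      exact smul_le_smul_of_nonneg_left (neg_le_abs a) (neg_nonneg.mpr hc.le)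
    · rw [← neg_smul]
      exact smul_le_smul_of_nonneg_left (le_abs_self a) (neg_nonneg.mpr hc.le)

lemma aux_key {a w : X} (ha : 0 ≤ a) (hw : 0 ≤ w) {r : ℝ} (hr : 0 ≤ r) :
    (r • ((a - w)⁺)) ⊓ w ≤ a := by
  have hu0 : (0 : X) ≤ (a - w)⁺ := posPart_nonneg _
  have hv0 : (0 : X) ≤ (w - a)⁺ := posPart_nonneg _
  have huv : ((a - w)⁺) ⊓ ((w - a)⁺) = 0 := by
    have hne : (w - a)⁺ = (a - w)⁻ := by rw [posPart_def, negPart_def, neg_sub]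
    rw [hne]
    exact posPart_inf_negPart_eq_zero _
  obtain ⟨n, hn⟩ := exists_nat_ge r
  have hru : r • ((a - w)⁺) ≤ (n : ℕ) • ((a - w)⁺) := by
    rw [← Nat.cast_smul_eq_nsmul ℝ, ← sub_nonneg, ← sub_smul]
    exact smul_nonneg (sub_nonneg.mpr hn) hu0
  have hnv : ((n : ℕ) • ((a - w)⁺)) ⊓ ((w - a)⁺) = 0 := aux_nsmul_disj hu0 hv0 huv n
  have hz0 : (0 : X) ≤ (r • ((a - w)⁺)) ⊓ w := le_inf (smul_nonneg hr hu0) hw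
  have hzv : ((r • ((a - w)⁺)) ⊓ w) ⊓ ((w - a)⁺) = 0 := by
    refine le_antisymm ?_ (le_inf hz0 hv0)
    calc ((r • ((a - w)⁺)) ⊓ w) ⊓ ((w - a)⁺)
        ≤ ((n : ℕ) • ((a - w)⁺)) ⊓ ((w - a)⁺) :=
          inf_le_inf_right _ (inf_le_left.trans hru)
      _ = 0 := hnv
  have h1 : (((r • ((a - w)⁺)) ⊓ w) - a)⁺ ≤ (r • ((a - w)⁺)) ⊓ w :=
    sup_le (sub_le_self _ ha) hz0
  have h2 : (((r • ((a - w)⁺)) ⊓ w) - a)⁺ ≤ (w - a)⁺ :=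
    sup_le ((sub_le_sub_right (inf_le_right : (r • ((a - w)⁺)) ⊓ w ≤ w) a).trans
      (le_posPart (a := w - a))) hv0
  have h3 : (((r • ((a - w)⁺)) ⊓ w) - a)⁺ = 0 :=
    le_antisymm ((le_inf h1 h2).trans hzv.le) (posPart_nonneg _)
  exact sub_nonpos.mp (posPart_eq_zero.mp h3)

end Aux

structure RieszPseudonorm (X : Type*) [Lattice X] [AddCommGroup X] [Module ℝ X] where
  toFun : X → ℝ
  nonneg : ∀ x, 0 ≤ toFun x
  subadd : ∀ x y, toFun (x + y) ≤ toFun x + toFun y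
  solid : ∀ x y, |x| ≤ |y| → toFun x ≤ toFun y
  tendsto_smul : ∀ x, Filter.Tendsto (fun r : ℝ => toFun (r • x)) (nhds 0) (nhds 0)

theorem stmt6 {X : Type*} [Lattice X] [AddCommGroup X] [Module ℝ X]
    [CovariantClass X X (· + ·) (· ≤ ·)] [PosSMulMono ℝ X]
    [TopologicalSpace X] [IsTopologicalAddGroup X] [ContinuousSMul ℝ X]
    {J : Type*} (ρ : J → RieszPseudonorm X)
    -- the (Hausdorff) topology is generated by the family of Riesz pseudonorms
    (hgen : ∀ S : Set X, S ∈ nhds (0 : X) ↔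
      ∃ (F : Finset J) (ε : ℝ), 0 < ε ∧ {x : X | ∀ j ∈ F, (ρ j).toFun x < ε} ⊆ S)
    (hsep : ∀ x : X, (∀ j : J, (ρ j).toFun x = 0) → x = 0)
    (ε : ℝ) (hε : 0 < ε) (j : J) (w : X) (hw : 0 ≤ w) (hw0 : w ≠ 0) :
    -- either V_{ε,w,j} ⊆ [-w,w], or V_{ε,w,j} contains a nontrivial ideal
    {x : X | (ρ j).toFun (|x| ⊓ w) < ε} ⊆ Set.Icc (-w) w ∨
    ∃ I : Submodule ℝ X, IsSolid (I : Set X) ∧ I ≠ ⊥ ∧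
      (I : Set X) ⊆ {x : X | (ρ j).toFun (|x| ⊓ w) < ε} := by
  rw [or_iff_not_imp_left]
  intro h
  rw [Set.not_subset] at h
  obtain ⟨x, hxV, hxI⟩ := h
  have hxw : ¬ |x| ≤ w := fun hle => by
    have h4 : (0 : X) ≤ x + w := neg_le_iff_add_nonneg'.mp ((neg_le_abs x).trans hle)
    exact hxI ⟨neg_le_iff_add_nonneg'.mpr (by rwa [add_comm]), (le_abs_self x).trans hle⟩
  have hu0 : (0 : X) ≤ (|x| - w)⁺ := posPart_nonneg _
  have hune : (|x| - w)⁺ ≠ 0 := fun h0 =>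
    hxw (sub_nonpos.mp (posPart_eq_zero.mp h0))
  refine ⟨{ carrier := {y : X | ∃ r : ℝ, 0 ≤ r ∧ |y| ≤ r • ((|x| - w)⁺)}
            add_mem' := ?_
            zero_mem' := ⟨0, le_refl 0, by simp⟩
            smul_mem' := ?_ }, ?_, ?_, ?_⟩
  · rintro a b ⟨r, hr, har⟩ ⟨s, hs, hbs⟩
    refine ⟨r + s, by positivity, (abs_add_le a b).trans ?_⟩
    rw [add_smul]
    calc |a| + |b| ≤ r • ((|x| - w)⁺) + |b| := add_le_add_left har _
      _ ≤ r • ((|x| - w)⁺) + s • ((|x| - w)⁺) := add_le_add_right hbs _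
  · rintro c a ⟨r, hr, har⟩
    refine ⟨|c| * r, by positivity, ?_⟩
    calc |c • a| ≤ |c| • |a| := aux_abs_smul c a
      _ ≤ |c| • (r • ((|x| - w)⁺)) := smul_le_smul_of_nonneg_left har (abs_nonneg c)
      _ = (|c| * r) • ((|x| - w)⁺) := (mul_smul _ _ _).symm
  · rintro a b hab ⟨r, hr, hbr⟩
    exact ⟨r, hr, hab.trans hbr⟩
  · intro hbot
    have hmem : (|x| - w)⁺ ∈ (⊥ : Submodule ℝ X) :=
      hbot ▸ ⟨1, zero_le_one, by rw [abs_of_nonneg hu0, one_smul]⟩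
    exact hune (Submodule.mem_bot ℝ |>.mp hmem)
  · rintro y ⟨r, hr, hyr⟩
    show (ρ j).toFun (|y| ⊓ w) < ε
    have hkey : (r • ((|x| - w)⁺)) ⊓ w ≤ |x| := aux_key (abs_nonneg x) hw hr
    have h1 : |y| ⊓ w ≤ |x| ⊓ w := by
      refine le_inf ?_ inf_le_right
      calc |y| ⊓ w ≤ (r • ((|x| - w)⁺)) ⊓ w := inf_le_inf_right w hyr
        _ ≤ |x| := hkey
    have h2 : (0 : X) ≤ |y| ⊓ w := le_inf (abs_nonneg y) hw
    have h3 : (0 : X) ≤ |x| ⊓ w := le_inf (abs_nonneg x) hw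
    exact ((ρ j).solid (|y| ⊓ w) (|x| ⊓ w)
      (by rw [abs_of_nonneg h2, abs_of_nonneg h3]; exact h1)).trans_lt hxV
end

section
/- Let (X,τ) be a locally solid vector lattice and Y a majorizing sublattice of X. If a net y_α in Y uτ-converges to 0 in Y, then y_α uτ-converges to 0 in X. -/
theorem stmt7 {X : Type*} [Lattice X] [AddCommGroup X] [Module ℝ X]
    [CovariantClass X X (· + ·) (· ≤ ·)]
    [TopologicalSpace X] [IsTopologicalAddGroup X]
    (hsolid : ∀ S ∈ nhds (0 : X), ∃ V ∈ nhds (0 : X), IsSolid V ∧ V ⊆ S)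
    -- Y is a sublattice (a linear subspace closed under |·|)
    (Y : Submodule ℝ X) (hYlat : ∀ x ∈ Y, |x| ∈ Y)
    -- Y is majorizing in X
    (hmaj : ∀ x : X, 0 ≤ x → ∃ v ∈ Y, x ≤ v)
    {ι : Type*} (l : Filter ι) (y : ι → X) (hy : ∀ α, y α ∈ Y)
    -- (y_α) uτ-converges to 0 in Y
    (h : ∀ w ∈ Y, 0 ≤ w → Filter.Tendsto (fun α => |y α| ⊓ w) l (nhds 0)) :
    -- (y_α) uτ-converges to 0 in X
    ∀ w : X, 0 ≤ w → Filter.Tendsto (fun α => |y α| ⊓ w) l (nhds 0) := by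
  intro w hw
  obtain ⟨v, hvY, hwv⟩ := hmaj w hw
  have huY : |v| ∈ Y := hYlat v hvY
  have hwu : w ≤ |v| := le_trans hwv (le_abs_self v)
  have hu : (0 : X) ≤ |v| := abs_nonneg v
  have htend := h |v| huY hu
  rw [Filter.tendsto_def] at htend ⊢
  intro S hS
  obtain ⟨V, hV, hVsolid, hVS⟩ := hsolid S hS
  filter_upwards [htend V hV] with α hα
  apply hVS
  refine hVsolid ?_ hα
  have h1 : (0:X) ≤ |y α| ⊓ w := le_inf (abs_nonneg _) hw
  have h2 : (0:X) ≤ |y α| ⊓ |v| := le_inf (abs_nonneg _) hu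
  rw [abs_of_nonneg h1, abs_of_nonneg h2]
  exact inf_le_inf_left _ hwu
end

section
/- Let (X,τ) be a locally solid vector lattice and Y a τ-dense sublattice of X. If a net y_α in Y uτ-converges to 0 in Y, then y_α uτ-converges to 0 in X. -/
theorem stmt8 {X : Type*} [Lattice X] [AddCommGroup X] [Module ℝ X]
    [CovariantClass X X (· + ·) (· ≤ ·)]
    [TopologicalSpace X] [IsTopologicalAddGroup X]
    (hsolid : ∀ S ∈ nhds (0 : X), ∃ V ∈ nhds (0 : X), IsSolid V ∧ V ⊆ S)
    -- Y is a sublattice (a linear subspace closed under |·|)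
    (Y : Submodule ℝ X) (hYlat : ∀ x ∈ Y, |x| ∈ Y)
    -- Y is τ-dense in X
    (hdense : Dense (Y : Set X))
    {ι : Type*} (l : Filter ι) (y : ι → X) (hy : ∀ α, y α ∈ Y)
    -- (y_α) uτ-converges to 0 in Y
    (h : ∀ w ∈ Y, 0 ≤ w → Filter.Tendsto (fun α => |y α| ⊓ w) l (nhds 0)) :
    -- (y_α) uτ-converges to 0 in X
    ∀ w : X, 0 ≤ w → Filter.Tendsto (fun α => |y α| ⊓ w) l (nhds 0) := by
  intro w hw
  rw [Filter.tendsto_def]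
  intro S hS
  -- get solid V ⊆ S
  obtain ⟨V, hV, hVsolid, hVS⟩ := hsolid S hS
  -- get U with U + U ⊆ V
  obtain ⟨U, hU, hUadd⟩ := exists_nhds_zero_half hV
  -- get solid U' ⊆ U
  obtain ⟨U', hU', hU'solid, hU'U⟩ := hsolid U hU
  -- find u ∈ Y with w - u ∈ U'
  have hmap : Filter.Tendsto (fun x : X => w - x) (nhds w) (nhds 0) := by
    have := (tendsto_const_nhds (x := w) (f := nhds w)).sub (Filter.tendsto_id (α := X))
    simpa using this
  have hnhd : (fun x : X => w - x) ⁻¹' U' ∈ nhds w := hmap hU'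
  obtain ⟨u, huU', huY⟩ := mem_closure_iff_nhds.mp (hdense w) _ hnhd
  -- |y α| ⊓ |u| tends to 0
  have hmain := h |u| (hYlat u huY) (abs_nonneg u)
  rw [Filter.tendsto_def] at hmain
  have hmem : {α | |y α| ⊓ |u| ∈ U'} ∈ l := hmain _ hU'
  refine Filter.mem_of_superset hmem ?_
  intro α hα
  simp only [Set.mem_setOf_eq] at hα
  -- the correction term d
  set d := |y α| ⊓ w - |y α| ⊓ |u| with hd
  have hdb : |d| ≤ |w - u| := by
    have h1 : |w ⊓ |y α| - (|u| ⊓ |y α|)| ≤ |w - (|u|)| := abs_inf_sub_inf_le_abs w (|u|) (|y α|)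
    have h2 : |w - (|u|)| ≤ |w - u| := by
      have h3 : w - |u| = |w| - |u| := by rw [abs_of_nonneg hw]
      rw [h3]
      exact abs_abs_sub_abs_le w u
    calc |d| = |w ⊓ |y α| - (|u| ⊓ |y α|)| := by
          rw [hd, inf_comm (|y α|) w, inf_comm (|y α|) (|u|)]
      _ ≤ |w - (|u|)| := h1
      _ ≤ |w - u| := h2
  have hdU' : d ∈ U' := hU'solid hdb (show w - u ∈ U' from huU')
  have : |y α| ⊓ w = (|y α| ⊓ |u|) + d := by rw [hd]; abel
  rw [Set.mem_preimage, this]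
  exact hVS (hUadd _ (hU'U hα) _ (hU'U hdU'))
end

section
/- Let (X,τ) be a locally solid vector lattice and Y a projection band in X. If a net y_α in Y uτ-converges to 0 in Y, then y_α uτ-converges to 0 in X. -/
lemma inf_add_le_aux {X : Type*} [Lattice X] [AddCommGroup X]
    [CovariantClass X X (· + ·) (· ≤ ·)] {a b c : X}
    (ha : 0 ≤ a) (hb : 0 ≤ b) (hc : 0 ≤ c) :
    a ⊓ (b + c) ≤ a ⊓ b + a ⊓ c := by
  have h1 : a ⊓ (b + c) - a ⊓ c ≤ a ⊓ b := by
    refine le_inf ?_ ?_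
    · have : a ⊓ (b + c) ≤ a + a ⊓ c :=
        le_trans inf_le_left (le_add_of_nonneg_right (le_inf ha hc))
      exact sub_le_iff_le_add.mpr this
    · have : a ⊓ (b + c) - a ⊓ c = (a ⊓ (b + c) - a) ⊔ (a ⊓ (b + c) - c) := by
        rw [sub_eq_add_neg, neg_inf, add_sup, sub_eq_add_neg, sub_eq_add_neg]
      rw [this]
      refine sup_le ?_ ?_
      · have : a ⊓ (b + c) - a ≤ 0 := sub_nonpos.mpr inf_le_left
        exact this.trans hb
      · have : a ⊓ (b + c) ≤ b + c := inf_le_right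
        exact sub_le_iff_le_add.mpr this
  exact sub_le_iff_le_add.mp h1

theorem stmt9 {X : Type*} [Lattice X] [AddCommGroup X] [Module ℝ X]
    [CovariantClass X X (· + ·) (· ≤ ·)]
    [TopologicalSpace X] [IsTopologicalAddGroup X]
    (hsolid : ∀ S ∈ nhds (0 : X), ∃ V ∈ nhds (0 : X), IsSolid V ∧ V ⊆ S)
    -- Y is a projection band: a solid linear subspace with X = Y ⊕ Y^d
    (Y : Submodule ℝ X) (hYsolid : IsSolid (Y : Set X))
    (hproj : ∀ x : X, ∃ v ∈ Y, ∃ w : X, (∀ u ∈ Y, |w| ⊓ |u| = 0) ∧ x = v + w)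
    {ι : Type*} (l : Filter ι) (y : ι → X) (hy : ∀ α, y α ∈ Y)
    -- (y_α) uτ-converges to 0 in Y
    (h : ∀ w ∈ Y, 0 ≤ w → Filter.Tendsto (fun α => |y α| ⊓ w) l (nhds 0)) :
    -- (y_α) uτ-converges to 0 in X
    ∀ w : X, 0 ≤ w → Filter.Tendsto (fun α => |y α| ⊓ w) l (nhds 0) := by
  intro w hw
  obtain ⟨v, hvY, u, hdisj, hwvu⟩ := hproj w
  -- v⁺ ∈ Y
  have hvpY : v ⊔ 0 ∈ Y := by
    have habs : |v ⊔ 0| ≤ |v| := by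
      rw [abs_of_nonneg (le_sup_right : (0:X) ≤ v ⊔ 0)]
      exact sup_le (le_abs_self v) (abs_nonneg v)
    exact hYsolid habs hvY
  have hvp : (0:X) ≤ v ⊔ 0 := le_sup_right
  -- key pointwise bound: |y α| ⊓ w ≤ |y α| ⊓ (v ⊔ 0)
  have key : ∀ α, |y α| ⊓ w ≤ |y α| ⊓ (v ⊔ 0) := by
    intro α
    have hyd : |u| ⊓ |y α| = 0 := hdisj (y α) (hy α)
    have hd0 : |y α| ⊓ (u ⊔ 0) = 0 := by
      have hle : |y α| ⊓ (u ⊔ 0) ≤ |u| ⊓ |y α| := by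
        refine le_inf ?_ inf_le_left
        refine le_trans inf_le_right ?_
        exact sup_le (le_abs_self u) (abs_nonneg u)
      have hge : (0:X) ≤ |y α| ⊓ (u ⊔ 0) := le_inf (abs_nonneg _) le_sup_right
      exact le_antisymm (hyd ▸ hle) hge
    have hwle : w ≤ (v ⊔ 0) + (u ⊔ 0) := by
      rw [hwvu]
      exact add_le_add le_sup_left le_sup_left
    calc |y α| ⊓ w ≤ |y α| ⊓ ((v ⊔ 0) + (u ⊔ 0)) :=
          inf_le_inf_left _ hwle
      _ ≤ |y α| ⊓ (v ⊔ 0) + |y α| ⊓ (u ⊔ 0) :=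
          inf_add_le_aux (abs_nonneg _) hvp (le_sup_right)
      _ = |y α| ⊓ (v ⊔ 0) := by rw [hd0, add_zero]
  have hf := h (v ⊔ 0) hvpY hvp
  -- squeeze via solid neighborhoods
  intro S hS
  obtain ⟨V, hV, hVsolid, hVS⟩ := hsolid S hS
  have := hf hV
  rw [Filter.mem_map] at this ⊢
  filter_upwards [this] with α hα
  refine hVS (hVsolid ?_ hα)
  have h1 : (0:X) ≤ |y α| ⊓ w := le_inf (abs_nonneg _) hw
  have h2 : (0:X) ≤ |y α| ⊓ (v ⊔ 0) := le_inf (abs_nonneg _) hvp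
  rw [abs_of_nonneg h1, abs_of_nonneg h2]
  exact key α
end

section
/- Let X be a vector lattice. There exists a linear topology τ on X such that a net x_α converges relatively uniformly to 0 if and only if x_α →τ 0, precisely when X has a strong order unit; in that case one may take τ to be the topology of the norm ‖x‖_e = inf{r > 0 : |x| ≤ re} for a strong unit e. -/
/-- A net (along a filter) converges relatively uniformly to 0. -/
def RUConvZero {X : Type*} [Lattice X] [AddCommGroup X] [Module ℝ X]
    {ι : Type*} (l : Filter ι) (x : ι → X) : Prop :=
  ∃ u : X, 0 ≤ u ∧ ∀ ε : ℝ, 0 < ε → ∀ᶠ α in l, |x α| ≤ ε • u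

universe u

section Aux

variable {X : Type*} [Lattice X] [AddCommGroup X] [Module ℝ X]
    [CovariantClass X X (· + ·) (· ≤ ·)] [PosSMulMono ℝ X]

lemma aux_smul_le_abs_smul_abs (c : ℝ) (x : X) : c • x ≤ |c| • |x| := by
  rcases le_total 0 c with h | h
  · rw [abs_of_nonneg h]
    exact smul_le_smul_of_nonneg_left (le_abs_self x) h
  · calc c • x = (-c) • (-x) := by rw [neg_smul, smul_neg, neg_neg]
      _ ≤ (-c) • |x| := smul_le_smul_of_nonneg_left (neg_le_abs x) (neg_nonneg.2 h)
      _ = |c| • |x| := by rw [abs_of_nonpos h]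

lemma aux_abs_smul_le (c : ℝ) (x : X) : |c • x| ≤ |c| • |x| := by
  refine abs_le'.2 ⟨aux_smul_le_abs_smul_abs c x, ?_⟩
  have := aux_smul_le_abs_smul_abs (-c) x
  rwa [neg_smul, abs_neg] at this

lemma aux_abs_smul_pos {c : ℝ} (hc : 0 < c) (x : X) : |c • x| = c • |x| := by
  refine le_antisymm ?_ ?_
  · have := aux_abs_smul_le c x
    rwa [abs_of_pos hc] at this
  · have h2 : |x| ≤ c⁻¹ • |c • x| := by
      have := aux_abs_smul_le c⁻¹ (c • x)
      rwa [smul_smul, inv_mul_cancel₀ hc.ne', one_smul,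
        abs_of_pos (inv_pos.2 hc)] at this
    calc c • |x| ≤ c • (c⁻¹ • |c • x|) := smul_le_smul_of_nonneg_left h2 hc.le
      _ = |c • x| := by rw [smul_smul, mul_inv_cancel₀ hc.ne', one_smul]

lemma aux_smul_mono_right {e : X} (h0 : 0 ≤ e) {r s : ℝ} (hrs : r ≤ s) :
    r • e ≤ s • e := by
  have := smul_nonneg (sub_nonneg.2 hrs) h0
  rw [sub_smul, sub_nonneg] at this
  exact this

variable {e : X}

lemma aux_nonempty (h0 : 0 ≤ e) (he : ∀ x : X, ∃ n : ℕ, |x| ≤ n • e) (x : X) :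
    {r : ℝ | 0 < r ∧ |x| ≤ r • e}.Nonempty := by
  obtain ⟨n, hn⟩ := he x
  refine ⟨(n : ℝ) + 1, by positivity, ?_⟩
  calc |x| ≤ n • e := hn
    _ = (n : ℝ) • e := (Nat.cast_smul_eq_nsmul ℝ n e).symm
    _ ≤ ((n : ℝ) + 1) • e := aux_smul_mono_right h0 (by linarith)

lemma aux_bddBelow (x : X) : BddBelow {r : ℝ | 0 < r ∧ |x| ≤ r • e} :=
  ⟨0, fun _ hr => hr.1.le⟩

lemma aux_nonneg (h0 : 0 ≤ e) (he : ∀ x : X, ∃ n : ℕ, |x| ≤ n • e) (x : X) :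
    0 ≤ sInf {r : ℝ | 0 < r ∧ |x| ≤ r • e} :=
  le_csInf (aux_nonempty h0 he x) fun _ hr => hr.1.le

/-- The key characterization: ru-convergence to 0 is equivalent to convergence of the
`e`-norm to 0, when `e` is a strong order unit. -/
lemma aux_ru_iff_inf (h0 : 0 ≤ e) (he : ∀ x : X, ∃ n : ℕ, |x| ≤ n • e)
    {ι : Type*} (l : Filter ι) (x : ι → X) :
    RUConvZero l x ↔
      Filter.Tendsto (fun α => sInf {r : ℝ | 0 < r ∧ |x α| ≤ r • e}) l (nhds 0) := by
  constructor
  · rintro ⟨u, hu0, hcv⟩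
    obtain ⟨n, hn⟩ := he u
    have hne : u ≤ (n : ℝ) • e := by
      rw [Nat.cast_smul_eq_nsmul ℝ n e]
      calc u = |u| := (abs_of_nonneg hu0).symm
        _ ≤ n • e := hn
    have key : ∀ δ : ℝ, 0 < δ →
        ∀ᶠ α in l, sInf {r : ℝ | 0 < r ∧ |x α| ≤ r • e} ≤ δ := by
      intro δ hδ
      have hε₀ : (0:ℝ) < δ / ((n : ℝ) + 1) := by positivity
      filter_upwards [hcv _ hε₀] with α hα
      refine csInf_le (aux_bddBelow _) ⟨hδ, ?_⟩
      calc |x α| ≤ (δ / ((n : ℝ) + 1)) • u := hα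
        _ ≤ (δ / ((n : ℝ) + 1)) • ((n : ℝ) • e) :=
            smul_le_smul_of_nonneg_left hne hε₀.le
        _ = (δ / ((n : ℝ) + 1) * (n : ℝ)) • e := by rw [smul_smul]
        _ ≤ δ • e := by
            refine aux_smul_mono_right h0 ?_
            rw [div_mul_eq_mul_div, div_le_iff₀ (by positivity)]
            nlinarith [Nat.cast_nonneg (α := ℝ) n]
    refine tendsto_order.2 ⟨fun a ha => ?_, fun a ha => ?_⟩
    · exact Filter.Eventually.of_forall fun α => lt_of_lt_of_le ha (aux_nonneg h0 he _)
    · filter_upwards [key (a / 2) (by linarith)] with α hα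
      linarith
  · intro h
    refine ⟨e, h0, fun ε hε => ?_⟩
    filter_upwards [h.eventually (gt_mem_nhds hε)] with α hα
    obtain ⟨r, hr, hrε⟩ := exists_lt_of_csInf_lt (aux_nonempty h0 he (x α)) hα
    exact hr.2.trans (aux_smul_mono_right h0 hrε.le)

/-- The `e`-seminorm as an `AddGroupSeminorm`. -/
noncomputable def eSeminorm (h0 : 0 ≤ e) (he : ∀ x : X, ∃ n : ℕ, |x| ≤ n • e) :
    AddGroupSeminorm X where
  toFun x := sInf {r : ℝ | 0 < r ∧ |x| ≤ r • e}
  map_zero' := by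
    refine le_antisymm ?_ (aux_nonneg h0 he 0)
    refine le_of_forall_pos_le_add fun ε hε => ?_
    rw [zero_add]
    exact csInf_le (aux_bddBelow _) ⟨hε, by simpa using smul_nonneg hε.le h0⟩
  add_le' x y := by
    set A := {r : ℝ | 0 < r ∧ |x| ≤ r • e}
    set B := {r : ℝ | 0 < r ∧ |y| ≤ r • e}
    have hkey : ∀ a ∈ A, ∀ b ∈ B,
        sInf {r : ℝ | 0 < r ∧ |x + y| ≤ r • e} ≤ a + b := by
      intro a ha b hb
      refine csInf_le (aux_bddBelow _) ⟨add_pos ha.1 hb.1, ?_⟩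
      calc |x + y| ≤ |x| + |y| := abs_add_le x y
        _ ≤ a • e + b • e := add_le_add ha.2 hb.2
        _ = (a + b) • e := (add_smul a b e).symm
    have h1 : ∀ b ∈ B, sInf {r : ℝ | 0 < r ∧ |x + y| ≤ r • e} - b ≤ sInf A := by
      intro b hb
      exact le_csInf (aux_nonempty h0 he x) fun a ha => by
        linarith [hkey a ha b hb]
    have h2 : sInf {r : ℝ | 0 < r ∧ |x + y| ≤ r • e} - sInf A ≤ sInf B := by
      refine le_csInf (aux_nonempty h0 he y) fun b hb => ?_
      linarith [h1 b hb]
    show sInf {r : ℝ | 0 < r ∧ |x + y| ≤ r • e} ≤ sInf A + sInf B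
    linarith
  neg' x := by simp only [abs_neg]

lemma eSeminorm_smul_le (h0 : 0 ≤ e) (he : ∀ x : X, ∃ n : ℕ, |x| ≤ n • e)
    (c : ℝ) (x : X) : eSeminorm h0 he (c • x) ≤ |c| * eSeminorm h0 he x := by
  rcases eq_or_ne c 0 with rfl | hc
  · simp [map_zero]
  · have hcpos : 0 < |c| := abs_pos.2 hc
    have happ : ∀ y : X, eSeminorm h0 he y = sInf {r : ℝ | 0 < r ∧ |y| ≤ r • e} :=
      fun _ => rfl
    rw [happ, happ, ← div_le_iff₀' hcpos]
    refine le_csInf (aux_nonempty h0 he x) fun r hr => ?_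
    rw [div_le_iff₀ hcpos]
    have hmem : |c| * r ∈ {s : ℝ | 0 < s ∧ |c • x| ≤ s • e} := by
      refine ⟨mul_pos hcpos hr.1, ?_⟩
      calc |c • x| ≤ |c| • |x| := aux_abs_smul_le c x
        _ ≤ |c| • (r • e) := smul_le_smul_of_nonneg_left hr.2 hcpos.le
        _ = (|c| * r) • e := by rw [smul_smul]
    calc sInf {s : ℝ | 0 < s ∧ |c • x| ≤ s • e} ≤ |c| * r :=
          csInf_le (aux_bddBelow _) hmem
      _ = r * |c| := mul_comm _ _

end Aux

theorem stmt10 {X : Type u} [Lattice X] [AddCommGroup X] [Module ℝ X]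
    [CovariantClass X X (· + ·) (· ≤ ·)] [PosSMulMono ℝ X] :
    -- (1) ⇔ (3): a linear topology describing ru-convergence exists iff X has a
    -- strong order unit
    ((∃ τ' : TopologicalSpace X,
        @IsTopologicalAddGroup X τ' _ ∧ @ContinuousSMul ℝ X _ _ τ' ∧
        ∀ (ι : Type u) (l : Filter ι) (x : ι → X),
          RUConvZero l x ↔ @Filter.Tendsto ι X x l (@nhds X τ' 0)) ↔
      (∃ e : X, 0 ≤ e ∧ ∀ x : X, ∃ n : ℕ, |x| ≤ n • e))
    ∧
    -- and in that case the norm ‖x‖_e = inf {r > 0 : |x| ≤ r e} works: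
    (∀ e : X, 0 ≤ e → (∀ x : X, ∃ n : ℕ, |x| ≤ n • e) →
      ∀ (ι : Type u) (l : Filter ι) (x : ι → X),
        RUConvZero l x ↔
          Filter.Tendsto (fun α => sInf {r : ℝ | 0 < r ∧ |x α| ≤ r • e}) l (nhds 0)) := by
  constructor
  · constructor
    · -- topology exists → strong unit
      rintro ⟨τ', hadd, hsmul, hconv⟩
      letI := τ'
      -- the identity net along `𝓝 0` converges, hence ru-converges
      have hid : RUConvZero (nhds (0 : X)) (id : X → X) :=
        (hconv X (nhds 0) id).2 Filter.tendsto_id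
      obtain ⟨u, hu0, hcv⟩ := hid
      have hS : ∀ᶠ y in nhds (0 : X), |y| ≤ u := by
        filter_upwards [hcv 1 one_pos] with y hy
        simpa using hy
      refine ⟨u, hu0, fun x => ?_⟩
      have h1 : Filter.Tendsto (fun n : ℕ => ((n : ℝ))⁻¹) Filter.atTop (nhds 0) :=
        tendsto_inv_atTop_zero.comp tendsto_natCast_atTop_atTop
      have htd : Filter.Tendsto (fun n : ℕ => ((n : ℝ))⁻¹ • x) Filter.atTop
          (nhds (0 : X)) := by
        have := h1.smul_const x
        rwa [zero_smul] at this
      obtain ⟨N, hN⟩ := Filter.eventually_atTop.1 (htd.eventually hS)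
      set n := N + 1 with hn
      have hnpos : (0:ℝ) < (n : ℝ) := by positivity
      have habs : ((n : ℝ))⁻¹ • |x| ≤ u := by
        have := hN n (Nat.le_succ N)
        rwa [aux_abs_smul_pos (inv_pos.2 hnpos) x] at this
      refine ⟨n, ?_⟩
      rw [← Nat.cast_smul_eq_nsmul ℝ n u]
      calc |x| = (n : ℝ) • (((n : ℝ))⁻¹ • |x|) := by
            rw [smul_smul, mul_inv_cancel₀ hnpos.ne', one_smul]
        _ ≤ (n : ℝ) • u := smul_le_smul_of_nonneg_left habs hnpos.le
    · -- strong unit → topology exists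
      rintro ⟨e, h0, he⟩
      letI : SeminormedAddCommGroup X := (eSeminorm h0 he).toSeminormedAddCommGroup
      letI : NormedSpace ℝ X := ⟨fun c x => by
        rw [Real.norm_eq_abs]; exact eSeminorm_smul_le h0 he c x⟩
      refine ⟨inferInstance, inferInstance, inferInstance, fun ι l x => ?_⟩
      rw [aux_ru_iff_inf h0 he l x]
      exact Iff.symm tendsto_zero_iff_norm_tendsto_zero
  · intro e h0 he ι l x
    exact aux_ru_iff_inf h0 he l x
end

section
/- In the vector lattice c₀₀ of eventually zero real sequences, a net x_α order converges to 0 if and only if it converges relatively uniformly to 0. -/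
/-- Order convergence to 0 of a net (along a filter): there is a decreasing net
(over a directed index) with infimum 0 eventually dominating |x_α|. -/
def OrderConvZero {X : Type u} [Lattice X] [AddCommGroup X]
    {ι : Type v} (l : Filter ι) (x : ι → X) : Prop :=
  ∃ (κ : Type u) (le : κ → κ → Prop) (y : κ → X),
    Nonempty κ ∧ (∀ a b : κ, ∃ c, le a c ∧ le b c) ∧
    (∀ a b : κ, le a b → y b ≤ y a) ∧ IsGLB (Set.range y) 0 ∧
    ∀ b : κ, ∀ᶠ α in l, |x α| ≤ y b

/-- In c₀₀, the vector lattice of eventually zero real sequences, order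
convergence to 0 coincides with relatively uniform convergence to 0. -/
theorem stmt12 {ι : Type} (l : Filter ι) (x : ι → (ℕ →₀ ℝ)) :
    OrderConvZero l x ↔ RUConvZero l x := by
  constructor
  · rintro ⟨κ, le, y, ⟨b₀⟩, hdir, hmono, hglb, hev⟩
    have hy0 : ∀ b, (0 : ℕ →₀ ℝ) ≤ y b := fun b => hglb.1 ⟨b, rfl⟩
    have hy0' : ∀ b n, 0 ≤ y b n := by
      intro b n
      have := Finsupp.le_def.mp (hy0 b) n
      simpa using this
    refine ⟨y b₀, hy0 b₀, ?_⟩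
    intro ε hε
    -- pointwise infimum is zero
    have hpt : ∀ (n : ℕ) (δ : ℝ), 0 < δ → ∃ b, y b n < δ := by
      intro n δ hδ
      by_contra h
      push_neg at h
      have hw : Finsupp.single n δ ∈ lowerBounds (Set.range y) := by
        rintro _ ⟨b, rfl⟩
        rw [Finsupp.le_def]
        intro m
        rcases eq_or_ne m n with rfl | hm
        · simpa using h b
        · rw [Finsupp.single_apply, if_neg (Ne.symm hm)]
          exact hy0' b m
      have h2 := Finsupp.le_def.mp (hglb.2 hw) n
      simp at h2
      linarith
    classical
    -- finite combination lemma
    have hcomb : ∀ t : Finset κ, ∃ c, y c ≤ y b₀ ∧ ∀ b ∈ t, y c ≤ y b := by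
      intro t
      induction t using Finset.induction_on with
      | empty => exact ⟨b₀, le_rfl, by simp⟩
      | @insert m s hm ih =>
        obtain ⟨c, hc0, hc⟩ := ih
        obtain ⟨d, hd1, hd2⟩ := hdir c m
        refine ⟨d, (hmono _ _ hd1).trans hc0, ?_⟩
        intro b hb
        rcases Finset.mem_insert.mp hb with rfl | hb
        · exact hmono _ _ hd2
        · exact (hmono _ _ hd1).trans (hc b hb)
    -- choice of indices handling each coordinate
    have hgex : ∀ n : ℕ, ∃ b : κ, 0 < y b₀ n → y b n < ε * y b₀ n := by
      intro n
      by_cases h : 0 < y b₀ n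
      · obtain ⟨b, hb⟩ := hpt n (ε * y b₀ n) (mul_pos hε h)
        exact ⟨b, fun _ => hb⟩
      · exact ⟨b₀, fun h' => absurd h' h⟩
    choose g hg using hgex
    obtain ⟨c, hc0, hc⟩ := hcomb ((y b₀).support.image g)
    have hle : y c ≤ ε • y b₀ := by
      rw [Finsupp.le_def]
      intro n
      rw [Finsupp.smul_apply, smul_eq_mul]
      by_cases h : 0 < y b₀ n
      · have hmem : g n ∈ (y b₀).support.image g :=
          Finset.mem_image_of_mem g (Finsupp.mem_support_iff.mpr (ne_of_gt h))
        have h1 := Finsupp.le_def.mp (hc _ hmem) n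
        exact h1.trans (le_of_lt (hg n h))
      · have hb0 : y b₀ n = 0 := le_antisymm (not_lt.mp h) (hy0' b₀ n)
        have h1 := Finsupp.le_def.mp hc0 n
        rw [hb0] at h1 ⊢
        rw [mul_zero]
        exact h1
    filter_upwards [hev c] with α hα
    exact hα.trans hle
  · rintro ⟨u, hu, h⟩
    have hun : ∀ n, 0 ≤ u n := by
      intro n
      have := Finsupp.le_def.mp hu n
      simpa using this
    refine ⟨{ε : ℝ // 0 < ε}, fun a b => b.1 ≤ a.1, fun ε => ε.1 • u,
      ⟨⟨1, one_pos⟩⟩, ?_, ?_, ?_, ?_⟩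
    · intro a b
      exact ⟨⟨min a.1 b.1, lt_min a.2 b.2⟩, min_le_left _ _, min_le_right _ _⟩
    · intro a b hab
      rw [Finsupp.le_def]
      intro n
      rw [Finsupp.smul_apply, Finsupp.smul_apply, smul_eq_mul, smul_eq_mul]
      exact mul_le_mul_of_nonneg_right hab (hun n)
    · constructor
      · rintro _ ⟨ε, rfl⟩
        rw [Finsupp.le_def]
        intro n
        rw [Finsupp.smul_apply, smul_eq_mul]
        simpa using mul_nonneg ε.2.le (hun n)
      · intro w hw
        rw [Finsupp.le_def]
        intro n
        have key : ∀ δ : ℝ, 0 < δ → w n ≤ δ := by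
          intro δ hδ
          have hun' := hun n
          have hεpos : (0:ℝ) < δ / (u n + 1) := div_pos hδ (by linarith)
          have h1 := Finsupp.le_def.mp (hw ⟨⟨δ / (u n + 1), hεpos⟩, rfl⟩) n
          rw [Finsupp.smul_apply, smul_eq_mul] at h1
          have h1' : w n ≤ δ / (u n + 1) * u n := h1
          have h2 : δ / (u n + 1) * u n ≤ δ / (u n + 1) * (u n + 1) :=
            mul_le_mul_of_nonneg_left (by linarith) hεpos.le
          have h3 : δ / (u n + 1) * (u n + 1) = δ := div_mul_cancel₀ δ (by linarith)
          linarith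
        simp only [Finsupp.coe_zero, Pi.zero_apply]
        by_contra hcon
        push_neg at hcon
        linarith [key (w n / 2) (by linarith)]
    · rintro ⟨ε, hε⟩
      exact h ε hε
end

section
/- Let X be a complete metrizable locally solid vector lattice with the Lebesgue property. Then a net x_α in X order converges to 0 if and only if it converges relatively uniformly to 0. -/
open Pointwise


section Helpers

set_option linter.unusedSectionVars false

lemma exists_inv_succ_le {ε : ℝ} (hε : 0 < ε) : ∃ n : ℕ, ((n : ℝ) + 1)⁻¹ ≤ ε := by
  obtain ⟨n, hn⟩ := exists_nat_ge (1 / ε)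
  refine ⟨n, ?_⟩
  have h1 : (0 : ℝ) < 1 / ε := by positivity
  have h2 : 1 / ε ≤ (n : ℝ) + 1 := by linarith
  have := inv_anti₀ h1 h2
  simpa [one_div] using this

variable {X : Type*} [Lattice X] [AddCommGroup X] [Module ℝ X]
    [CovariantClass X X (· + ·) (· ≤ ·)] [PosSMulMono ℝ X]

lemma my_smul_nonneg {c : ℝ} {u : X} (hc : 0 ≤ c) (hu : 0 ≤ u) : 0 ≤ c • u := by
  calc (0:X) = c • 0 := (smul_zero c).symm
  _ ≤ c • u := smul_le_smul_of_nonneg_left hu hc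

lemma smul_coeff_mono {r s : ℝ} {u : X} (h : r ≤ s) (hu : 0 ≤ u) : r • u ≤ s • u := by
  have h0 : 0 ≤ (s - r) • u := my_smul_nonneg (by linarith) hu
  rw [sub_smul] at h0
  exact sub_nonneg.1 h0

lemma my_sum_nonneg {f : ℕ → X} {s : Finset ℕ} (h : ∀ k ∈ s, 0 ≤ f k) :
    0 ≤ ∑ k ∈ s, f k := by
  haveI : IsOrderedAddMonoid X :=
    { add_le_add_left := fun a b hab c => add_le_add hab le_rfl }
  exact Finset.sum_nonneg h

lemma my_single_le_sum {f : ℕ → X} {s : Finset ℕ} (h : ∀ k ∈ s, 0 ≤ f k) {i : ℕ}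
    (hi : i ∈ s) : f i ≤ ∑ k ∈ s, f k := by
  haveI : IsOrderedAddMonoid X :=
    { add_le_add_left := fun a b hab c => add_le_add hab le_rfl }
  exact Finset.single_le_sum h hi

variable [UniformSpace X] [IsUniformAddGroup X] [T2Space X] [ContinuousSMul ℝ X]

lemma cone_closed (hsolid : ∀ S ∈ nhds (0 : X), ∃ V ∈ nhds (0 : X), IsSolid V ∧ V ⊆ S) :
    IsClosed {v : X | 0 ≤ v} := by
  have hcont : Continuous (fun v : X => v⁻) := by
    rw [continuous_iff_continuousAt]
    intro a
    have : Filter.Tendsto (fun v : X => v⁻ - a⁻) (nhds a) (nhds 0) := by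
      rw [Filter.tendsto_def]
      intro S hS
      obtain ⟨V, hV, hVsolid, hVS⟩ := hsolid S hS
      have hpre : {v : X | v - a ∈ V} ∈ nhds a := by
        have : Filter.Tendsto (fun v : X => v - a) (nhds a) (nhds 0) := by
          simpa using (continuous_sub_right a).tendsto a
        exact this hV
      refine Filter.mem_of_superset hpre ?_
      intro v hv
      have key : |v⁻ - a⁻| ≤ |v - a| := by
        have h1 := abs_sup_sub_sup_le_abs (-v) (-a) 0
        rw [neg_sub_neg, abs_sub_comm a v] at h1
        rw [negPart_def, negPart_def]
        exact h1
      exact hVS (hVsolid key hv)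
    have := this.add (tendsto_const_nhds (x := a⁻))
    exact (by simpa using this : Filter.Tendsto (fun v : X => v⁻) (nhds a) (nhds a⁻))
  have : {v : X | 0 ≤ v} = (fun v : X => v⁻) ⁻¹' {0} := by
    ext v
    simp only [Set.mem_setOf_eq, Set.mem_preimage, Set.mem_singleton_iff]
    exact negPart_eq_zero.symm
  rw [this]
  exact isClosed_singleton.preimage hcont

lemma arch_zero (hsolid : ∀ S ∈ nhds (0 : X), ∃ V ∈ nhds (0 : X), IsSolid V ∧ V ⊆ S)
    {u v : X} (hu : 0 ≤ u) (hv : 0 ≤ v) (h : ∀ ε : ℝ, 0 < ε → v ≤ ε • u) : v = 0 := by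
  by_contra hne
  have hmem : {v}ᶜ ∈ nhds (0 : X) :=
    isOpen_compl_singleton.mem_nhds (by simpa [eq_comm] using hne)
  obtain ⟨V, hV, hVsolid, hVS⟩ := hsolid _ hmem
  have htend : Filter.Tendsto (fun n : ℕ => ((n : ℝ) + 1)⁻¹ • u) Filter.atTop (nhds 0) := by
    have h1 : Filter.Tendsto (fun n : ℕ => ((n : ℝ) + 1)⁻¹) Filter.atTop (nhds 0) := by
      simpa [one_div] using (tendsto_one_div_add_atTop_nhds_zero_nat :
        Filter.Tendsto (fun n : ℕ => 1 / ((n : ℝ) + 1)) Filter.atTop (nhds 0))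
    simpa using h1.smul_const u
  obtain ⟨n, hn⟩ := (htend.eventually (Filter.eventually_mem_set.2 hV)).exists
  have hterm : (0:X) ≤ ((n : ℝ) + 1)⁻¹ • u := my_smul_nonneg (by positivity) hu
  have habs : |v| ≤ |((n : ℝ) + 1)⁻¹ • u| := by
    rw [abs_of_nonneg hv, abs_of_nonneg hterm]
    exact h _ (by positivity)
  exact hVS (hVsolid habs hn) rfl

end Helpers

theorem stmt13 {X : Type u} [Lattice X] [AddCommGroup X] [Module ℝ X]
    [CovariantClass X X (· + ·) (· ≤ ·)] [PosSMulMono ℝ X]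
    -- complete metrizable linear topology
    [UniformSpace X] [IsUniformAddGroup X] [CompleteSpace X] [T2Space X]
    [(uniformity X).IsCountablyGenerated] [ContinuousSMul ℝ X]
    -- locally solid
    (hsolid : ∀ S ∈ nhds (0 : X), ∃ V ∈ nhds (0 : X), IsSolid V ∧ V ⊆ S)
    -- the Lebesgue property: every decreasing net with infimum 0 is τ-null
    (hLeb : ∀ (κ : Type u) (le : κ → κ → Prop) (y : κ → X),
      Nonempty κ → (∀ a b : κ, ∃ c, le a c ∧ le b c) →
      (∀ a b : κ, le a b → y b ≤ y a) → IsGLB (Set.range y) 0 →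
      Filter.Tendsto y (⨅ a : κ, Filter.principal {b : κ | le a b}) (nhds 0))
    {ι : Type v} (l : Filter ι) (x : ι → X) :
    OrderConvZero l x ↔ RUConvZero l x := by
  constructor
  · rintro ⟨κ, le, y, hne, hdir, hanti, hglb, hev⟩
    haveI := hne
    have hy0 : ∀ b, 0 ≤ y b := fun b => hglb.1 ⟨b, rfl⟩
    -- the canonical directed filter
    set F : Filter κ := ⨅ a : κ, Filter.principal {b : κ | y b ≤ y a} with hF
    have hdir' : ∀ a b : κ, ∃ c, y c ≤ y a ∧ y c ≤ y b := by
      intro a b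
      obtain ⟨c, h1, h2⟩ := hdir a b
      exact ⟨c, hanti _ _ h1, hanti _ _ h2⟩
    haveI hFne : F.NeBot := by
      apply Filter.iInf_neBot_of_directed
      · intro a b
        obtain ⟨c, h1, h2⟩ := hdir' a b
        exact ⟨c, Filter.principal_mono.2 (fun b' hb' => le_trans hb' h1),
          Filter.principal_mono.2 (fun b' hb' => le_trans hb' h2)⟩
      · exact fun a => Filter.principal_neBot_iff.2 ⟨a, le_refl (y a)⟩
    have htd : Filter.Tendsto y F (nhds 0) :=
      hLeb κ (fun a b => y b ≤ y a) y hne hdir' (fun a b h => h) hglb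
    -- countable antitone basis of neighborhoods of zero
    haveI : (nhds (0 : X)).IsCountablyGenerated := by
      rw [nhds_eq_comap_uniformity]; infer_instance
    obtain ⟨B, hB⟩ := (nhds (0 : X)).exists_antitone_basis
    have hBmem : ∀ n, B n ∈ nhds (0 : X) := fun n => hB.1.mem_of_mem trivial
    -- build a shrinking sequence of solid neighborhoods
    have key : ∀ (T : Set X) (n : ℕ), ∃ W' : Set X, W' ∈ nhds 0 ∧ IsSolid W' ∧
        (T ∈ nhds 0 → W' + W' ⊆ T) ∧ W' ⊆ B n := by
      intro T n
      by_cases hT : T ∈ nhds (0 : X)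
      · obtain ⟨U, hU, hUsub⟩ := exists_nhds_zero_half hT
        obtain ⟨V, hV, hVsolid, hVsub⟩ := hsolid (U ∩ B n) (Filter.inter_mem hU (hBmem n))
        refine ⟨V, hV, hVsolid, fun _ => ?_, fun v hv => (hVsub hv).2⟩
        rintro z ⟨v, hv, w, hw, rfl⟩
        exact hUsub v (hVsub hv).1 w (hVsub hw).1
      · obtain ⟨V, hV, hVsolid, hVsub⟩ := hsolid (B n) (hBmem n)
        exact ⟨V, hV, hVsolid, fun h => absurd h hT, hVsub⟩
    choose next hnext1 hnext2 hnext3 hnext4 using key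
    obtain ⟨W, hWnhds, hWsolid, hWadd, hWB⟩ : ∃ W : ℕ → Set X, (∀ n, W n ∈ nhds 0) ∧
        (∀ n, IsSolid (W n)) ∧ (∀ n, W (n + 1) + W (n + 1) ⊆ W n) ∧ (∀ n, W n ⊆ B n) := by
      refine ⟨fun n => Nat.rec (next Set.univ 0) (fun m Wm => next Wm (m + 1)) n, ?_, ?_, ?_, ?_⟩
      · intro n; cases n <;> exact hnext1 _ _
      · intro n; cases n <;> exact hnext2 _ _
      · intro n; exact hnext3 _ _ (by cases n <;> exact hnext1 _ _)
      · intro n; cases n <;> exact hnext4 _ _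
    have hW0 : ∀ n, (0 : X) ∈ W n := fun n => mem_of_mem_nhds (hWnhds n)
    have hWsym : ∀ n, ∀ z ∈ W n, -z ∈ W n := fun n z hz => hWsolid n (by rw [abs_neg]) hz
    -- choose indices
    have hchoice : ∀ n : ℕ, ∃ b : κ, ((n : ℝ) + 1) • y b ∈ W (n + 1) := by
      intro n
      have hts : Filter.Tendsto (fun b => ((n : ℝ) + 1) • y b) F (nhds 0) := by
        simpa using htd.const_smul ((n : ℝ) + 1)
      exact (hts.eventually (Filter.eventually_mem_set.2 (hWnhds (n + 1)))).exists
    choose b hb using hchoice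
    set z : ℕ → X := fun n => ((n : ℝ) + 1) • y (b n) with hz
    have hz0 : ∀ n, 0 ≤ z n := fun n => my_smul_nonneg (by positivity) (hy0 _)
    have hsum : ∀ (m n : ℕ), (∑ k ∈ Finset.Ico n (n + m), z k) ∈ W n := by
      intro m
      induction m with
      | zero => intro n; simpa using hW0 n
      | succ m ih =>
        intro n
        have hlt : n < n + (m + 1) := by omega
        rw [Finset.sum_eq_sum_Ico_succ_bot hlt]
        have heq : n + (m + 1) = (n + 1) + m := by omega
        rw [heq]
        exact hWadd n (Set.add_mem_add (hb n) (ih (n + 1)))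
    set S : ℕ → X := fun N => ∑ k ∈ Finset.range N, z k with hS
    have hdiff : ∀ {N M : ℕ}, N ≤ M → S M - S N ∈ W N := by
      intro N M h
      have h1 := Finset.sum_Ico_eq_sub z h
      have h2 := hsum (M - N) N
      rw [Nat.add_sub_cancel' h, h1] at h2
      exact h2
    have hcauchy : CauchySeq S := by
      rw [cauchySeq_iff]
      intro V hV
      rw [uniformity_eq_comap_nhds_zero X, Filter.mem_comap] at hV
      obtain ⟨U, hU, hUV⟩ := hV
      obtain ⟨n, -, hn⟩ := hB.1.mem_iff.1 hU
      refine ⟨n + 1, fun k hk l hl => ?_⟩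
      apply hUV
      show S l - S k ∈ U
      have h1 : S l - S (n + 1) ∈ W (n + 1) := hdiff hl
      have h2 : S k - S (n + 1) ∈ W (n + 1) := hdiff hk
      have heq : S l - S k = (S l - S (n + 1)) + -(S k - S (n + 1)) := by abel
      rw [heq]
      exact hn (hWB n (hWadd n (Set.add_mem_add h1 (hWsym _ _ h2))))
    obtain ⟨u, hu⟩ := cauchySeq_tendsto_of_complete hcauchy
    have hcone := cone_closed hsolid
    have hu0 : 0 ≤ u := hcone.mem_of_tendsto hu
      (Filter.Eventually.of_forall fun N => by
        show (0:X) ≤ ∑ k ∈ Finset.range N, z k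
        exact my_sum_nonneg fun k _ => hz0 k)
    have hzu : ∀ n, z n ≤ u := by
      intro n
      have hts : Filter.Tendsto (fun N => S N - z n) Filter.atTop (nhds (u - z n)) :=
        hu.sub tendsto_const_nhds
      have hmem : u - z n ∈ {v : X | 0 ≤ v} := hcone.mem_of_tendsto hts
        (Filter.eventually_atTop.2 ⟨n + 1, fun N hN => by
          show (0:X) ≤ S N - z n
          refine sub_nonneg.2 ?_
          show z n ≤ ∑ k ∈ Finset.range N, z k
          exact my_single_le_sum (fun k _ => hz0 k) (Finset.mem_range.2 (by omega))⟩)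
      exact sub_nonneg.1 hmem
    refine ⟨u, hu0, ?_⟩
    intro ε hε
    obtain ⟨n, hcoef⟩ := exists_inv_succ_le hε
    have hyb : y (b n) ≤ ((n : ℝ) + 1)⁻¹ • u := by
      have h1 := smul_le_smul_of_nonneg_left (hzu n)
        (inv_nonneg.2 (by positivity : (0:ℝ) ≤ (n : ℝ) + 1))
      rwa [hz, smul_smul, inv_mul_cancel₀ (by positivity), one_smul] at h1
    have hfin : ((n : ℝ) + 1)⁻¹ • u ≤ ε • u := smul_coeff_mono hcoef hu0
    exact (hev (b n)).mono fun α hα => le_trans hα (le_trans hyb hfin)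
  · rintro ⟨u, hu0, h⟩
    refine ⟨ULift ℕ, fun a b => a.down ≤ b.down,
      fun n => ((n.down : ℝ) + 1)⁻¹ • u, ⟨⟨0⟩⟩, ?_, ?_, ⟨?_, ?_⟩, ?_⟩
    · intro a b
      exact ⟨⟨max a.down b.down⟩, le_max_left _ _, le_max_right _ _⟩
    · intro a b hab
      refine smul_coeff_mono ?_ hu0
      have hcast : (a.down : ℝ) ≤ b.down := Nat.cast_le.2 hab
      exact inv_anti₀ (by positivity) (by linarith)
    · rintro v ⟨n, rfl⟩
      exact my_smul_nonneg (by positivity) hu0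
    · intro w hw
      have hwle : ∀ n : ℕ, w ≤ ((n : ℝ) + 1)⁻¹ • u := fun n => hw ⟨⟨n⟩, rfl⟩
      have hsup0 : w ⊔ 0 = 0 := by
        apply arch_zero hsolid hu0 le_sup_right
        intro ε hε
        obtain ⟨n, hcoef⟩ := exists_inv_succ_le hε
        have h1 : w ⊔ 0 ≤ ((n : ℝ) + 1)⁻¹ • u :=
          sup_le (hwle n) (my_smul_nonneg (by positivity) hu0)
        exact h1.trans (smul_coeff_mono hcoef hu0)
      calc w ≤ w ⊔ 0 := le_sup_left
      _ = 0 := hsup0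
    · intro bb
      exact h (((bb.down : ℝ) + 1)⁻¹) (by positivity)
end

section
/- Let Ω be a set and X = ℝ^Ω with pointwise order. Then the following are equivalent: (1) for every net f_α in X, f_α order converges to 0 if and only if f_α converges relatively uniformly to 0; (2) Ω is countable. -/
open Filter

/-- ru-convergence to 0 always implies order convergence to 0 in ℝ^Ω. -/
lemma ru_imp_order {Ω : Type u} {ι : Type v} (l : Filter ι) (x : ι → Ω → ℝ)
    (h : RUConvZero l x) : OrderConvZero l x := by
  obtain ⟨u, hu0, hu⟩ := h
  refine ⟨ULift.{u} ℕ, fun a b => a.down ≤ b.down,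
    fun n => ((n.down : ℝ) + 1)⁻¹ • u, ⟨⟨0⟩⟩, ?_, ?_, ?_, ?_⟩
  · intro a b; exact ⟨⟨max a.down b.down⟩, le_max_left _ _, le_max_right _ _⟩
  · intro a b hab ω
    simp only [Pi.smul_apply, smul_eq_mul]
    apply mul_le_mul_of_nonneg_right _ (hu0 ω)
    apply inv_anti₀ (by positivity)
    have : (a.down : ℝ) ≤ b.down := by exact_mod_cast hab
    linarith
  · constructor
    · rintro z ⟨n, rfl⟩ ω
      simp only [Pi.smul_apply, smul_eq_mul, Pi.zero_apply]
      exact mul_nonneg (by positivity) (hu0 ω)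
    · intro g hg ω
      by_contra hgω
      push_neg at hgω
      simp only [Pi.zero_apply] at hgω
      obtain ⟨n, hn⟩ := exists_nat_gt (u ω / g ω)
      have h1 := hg ⟨⟨n⟩, rfl⟩ ω
      simp only [Pi.smul_apply, smul_eq_mul] at h1
      have hn1 : (0:ℝ) < (n:ℝ) + 1 := by positivity
      have h2 : u ω < ((n:ℝ) + 1) * g ω := by
        have := (div_lt_iff₀ hgω).mp hn
        nlinarith
      have h3 : ((n:ℝ)+1)⁻¹ * u ω < g ω := by
        rw [inv_mul_lt_iff₀ hn1]; linarith
      linarith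
  · intro b
    have hpos : (0:ℝ) < ((b.down : ℝ) + 1)⁻¹ := by positivity
    exact hu _ hpos

/-- Over a countable Ω, order convergence to 0 implies ru-convergence to 0. -/
lemma order_imp_ru {Ω : Type u} [Countable Ω] {ι : Type v} (l : Filter ι)
    (x : ι → Ω → ℝ) (h : OrderConvZero l x) : RUConvZero l x := by
  obtain ⟨κ, le, y, ⟨b₀⟩, hdir, hanti, hglb, hev⟩ := h
  classical
  -- y is nonnegative
  have hynn : ∀ b, (0 : Ω → ℝ) ≤ y b := fun b => hglb.1 ⟨b, rfl⟩
  -- pointwise infimum is 0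
  have hinf : ∀ (ω : Ω) (δ : ℝ), 0 < δ → ∃ b, y b ω < δ := by
    intro ω δ hδ
    by_contra hc
    push_neg at hc
    have hlb : (fun ω' => if ω' = ω then δ else 0) ∈ lowerBounds (Set.range y) := by
      rintro z ⟨b, rfl⟩ ω'
      by_cases hω' : ω' = ω
      · subst hω'; simpa using hc b
      · simpa [hω'] using hynn b ω'
    have := hglb.2 hlb ω
    simp at this
    linarith
  -- finite sets of points can be handled by a single index
  have hfin : ∀ (s : Set Ω), s.Finite → ∀ δ : ℝ, 0 < δ →
      ∃ c, ∀ ω ∈ s, y c ω < δ := by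
    intro s hs
    refine Set.Finite.induction_on s hs ?_ ?_
    · intro δ hδ; exact ⟨b₀, by simp⟩
    · intro a s _ _ ih δ hδ
      obtain ⟨c, hc⟩ := ih δ hδ
      obtain ⟨b, hb⟩ := hinf a δ hδ
      obtain ⟨d, hd1, hd2⟩ := hdir b c
      refine ⟨d, fun ω hω => ?_⟩
      rcases Set.mem_insert_iff.mp hω with rfl | hω
      · exact lt_of_le_of_lt (hanti b d hd1 ω) hb
      · exact lt_of_le_of_lt (hanti c d hd2 ω) (hc ω hω)
  -- enumerate Ω
  obtain ⟨e, he⟩ := Countable.exists_injective_nat' (α := Ω)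
  have hc : ∀ n : ℕ, ∃ c, ∀ ω : Ω, e ω ≤ n → y c ω < ((n:ℝ)+1)⁻¹ := by
    intro n
    have hfin' : {ω : Ω | e ω ≤ n}.Finite := by
      have heq : {ω : Ω | e ω ≤ n} = e ⁻¹' (Set.Iic n) := rfl
      rw [heq]
      exact Set.Finite.preimage (Function.Injective.injOn he) (Set.finite_Iic n)
    obtain ⟨c, hc⟩ := hfin _ hfin' (((n:ℝ)+1)⁻¹) (by positivity)
    exact ⟨c, fun ω hω => hc ω hω⟩
  choose c hcspec using hc
  set u : Ω → ℝ := fun ω => 1 + ∑ n ∈ Finset.range (e ω), ((n:ℝ)+1) * y (c n) ω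
    with hudef
  have hterm : ∀ (ω : Ω) (n : ℕ), 0 ≤ ((n:ℝ)+1) * y (c n) ω :=
    fun ω n => mul_nonneg (by positivity) (hynn _ ω)
  have hsumnn : ∀ ω : Ω, 0 ≤ ∑ n ∈ Finset.range (e ω), ((n:ℝ)+1) * y (c n) ω :=
    fun ω => Finset.sum_nonneg fun n _ => hterm ω n
  have hu0 : (0 : Ω → ℝ) ≤ u := by
    intro ω
    have := hsumnn ω
    simp only [hudef, Pi.zero_apply]
    linarith
  have hkey : ∀ n : ℕ, y (c n) ≤ ((n:ℝ)+1)⁻¹ • u := by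
    intro n ω
    simp only [Pi.smul_apply, smul_eq_mul]
    have hn1 : (0:ℝ) < (n:ℝ)+1 := by positivity
    have hmain : ((n:ℝ)+1) * y (c n) ω ≤ u ω := by
      by_cases hcase : e ω ≤ n
      · have hy := hcspec n ω hcase
        have hlt : ((n:ℝ)+1) * y (c n) ω < 1 := by
          calc ((n:ℝ)+1) * y (c n) ω < ((n:ℝ)+1) * ((n:ℝ)+1)⁻¹ :=
                mul_lt_mul_of_pos_left hy hn1
            _ = 1 := mul_inv_cancel₀ (ne_of_gt hn1)
        have := hsumnn ω
        simp only [hudef]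
        linarith
      · push_neg at hcase
        have hmem : n ∈ Finset.range (e ω) := Finset.mem_range.mpr hcase
        have := Finset.single_le_sum (f := fun m : ℕ => ((m:ℝ)+1) * y (c m) ω)
          (fun m _ => hterm ω m) hmem
        simp only [hudef]
        linarith
    calc y (c n) ω = ((n:ℝ)+1)⁻¹ * (((n:ℝ)+1) * y (c n) ω) := by
          field_simp
      _ ≤ ((n:ℝ)+1)⁻¹ * u ω := mul_le_mul_of_nonneg_left hmain (by positivity)
  refine ⟨u, hu0, ?_⟩
  intro ε hε
  obtain ⟨n, hn⟩ := exists_nat_gt ε⁻¹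
  have hn1 : (0:ℝ) < (n:ℝ)+1 := by positivity
  have hinv : ((n:ℝ)+1)⁻¹ < ε := by
    rw [inv_lt_comm₀ hn1 hε]
    linarith
  have hsmul : ((n:ℝ)+1)⁻¹ • u ≤ ε • u := by
    intro ω
    simp only [Pi.smul_apply, smul_eq_mul]
    exact mul_le_mul_of_nonneg_right (le_of_lt hinv) (hu0 ω)
  filter_upwards [hev (c n)] with α hα
  exact le_trans hα (le_trans (hkey n) hsmul)

/-- In ℝ^Ω with pointwise order, order convergence of nets coincides with
relatively uniform convergence iff Ω is countable. -/
theorem stmt14 (Ω : Type u) :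
    (∀ (ι : Type u) (l : Filter ι) (f : ι → Ω → ℝ),
      OrderConvZero l f ↔ RUConvZero l f) ↔ Countable Ω := by
  constructor
  · intro h
    classical
    set f : Finset Ω → Ω → ℝ := fun F ω => if ω ∈ F then 0 else 1 with hfdef
    have hfnn : ∀ F, (0 : Ω → ℝ) ≤ f F := by
      intro F ω
      simp only [hfdef, Pi.zero_apply]
      split <;> norm_num
    have hanti : ∀ F G : Finset Ω, F ⊆ G → f G ≤ f F := by
      intro F G hFG ω
      simp only [hfdef]
      by_cases hω : ω ∈ G
      · simp only [hω, if_true]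
        split <;> norm_num
      · have hωF : ω ∉ F := fun h' => hω (hFG h')
        simp [hω, hωF]
    have horder : OrderConvZero (atTop : Filter (Finset Ω)) f := by
      refine ⟨Finset Ω, (· ⊆ ·), f, ⟨∅⟩, ?_, hanti, ⟨?_, ?_⟩, ?_⟩
      · intro a b
        exact ⟨a ∪ b, Finset.subset_union_left, Finset.subset_union_right⟩
      · rintro z ⟨F, rfl⟩
        exact hfnn F
      · intro g hg ω
        have := hg ⟨{ω}, rfl⟩ ω
        simpa [hfdef] using this
      · intro F
        filter_upwards [eventually_ge_atTop F] with G hG ω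
        rw [Pi.abs_apply, abs_of_nonneg (hfnn G ω)]
        exact hanti F G hG ω
    obtain ⟨u, hu0, hu⟩ := (h _ atTop f).mp horder
    have key : ∀ n : ℕ, ∃ F : Finset Ω, ∀ ω : Ω, u ω ≤ n → ω ∈ F := by
      intro n
      have hε : (0:ℝ) < ((n:ℝ)+1)⁻¹ := by positivity
      obtain ⟨F, hF⟩ := eventually_atTop.mp (hu _ hε)
      refine ⟨F, fun ω hω => ?_⟩
      by_contra hmem
      have h1 := hF F le_rfl ω
      rw [Pi.abs_apply] at h1
      simp only [hfdef, hmem, if_false, Pi.smul_apply, smul_eq_mul] at h1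
      rw [abs_one] at h1
      have hn1 : (0:ℝ) < (n:ℝ)+1 := by positivity
      have hle : ((n:ℝ)+1)⁻¹ * u ω ≤ ((n:ℝ)+1)⁻¹ * n :=
        mul_le_mul_of_nonneg_left hω (by positivity)
      have hlt : ((n:ℝ)+1)⁻¹ * (n:ℝ) < 1 := by
        rw [inv_mul_lt_iff₀ hn1]; linarith
      linarith
    choose F hF using key
    have huniv : (Set.univ : Set Ω).Countable := by
      have hsub : (Set.univ : Set Ω) ⊆ ⋃ n : ℕ, (F n : Set Ω) := by
        intro ω _
        obtain ⟨n, hn⟩ := exists_nat_ge (u ω)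
        exact Set.mem_iUnion.mpr ⟨n, hF n ω hn⟩
      exact Set.Countable.mono hsub (Set.countable_iUnion fun n => (F n).countable_toSet)
    exact Set.countable_univ_iff.mp huniv
  · intro hΩ ι l f
    exact ⟨fun hf => @order_imp_ru Ω hΩ ι l f hf, ru_imp_order l f⟩
end

section
/- Let (X,τ) be a locally solid vector lattice and Q = {e_γ}_{γ∈Γ} an orthogonal system of nonzero positive elements. For x ∈ X_+ and (n,H) ∈ ℕ × F(Γ) (F(Γ) the finite subsets of Γ ordered by inclusion), set x_{n,H} = Σ_{γ∈H} x ∧ n e_γ. Then Q is a topological orthogonal system (i.e., the ideal generated by Q is τ-dense) if and only if x_{n,H} →τ x for every x ∈ X_+. -/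
section aux
variable {X : Type*} [Lattice X] [AddCommGroup X]
  [CovariantClass X X (· + ·) (· ≤ ·)] {a b c x : X}

private lemma aux_inf_add_le (ha : 0 ≤ a) (hb : 0 ≤ b) (hc : 0 ≤ c) :
    a ⊓ (b + c) ≤ a ⊓ b + a ⊓ c := by
  rw [inf_add, add_inf, add_inf]
  refine le_inf (le_inf ?_ ?_) (le_inf ?_ ?_)
  · exact inf_le_left.trans (le_add_of_nonneg_right ha)
  · exact inf_le_left.trans (le_add_of_nonneg_right hc)
  · exact inf_le_left.trans (le_add_of_nonneg_left hb)
  · exact inf_le_right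

private lemma aux_inf_sum_le {ι : Type*} (s : Finset ι) (f : ι → X) (ha : 0 ≤ a)
    (hf : ∀ i ∈ s, 0 ≤ f i) : a ⊓ ∑ i ∈ s, f i ≤ ∑ i ∈ s, a ⊓ f i := by
  letI : IsOrderedAddMonoid X :=
    { add_le_add_left := fun a b h c => add_le_add_left h c }
  induction s using Finset.cons_induction with
  | empty => simpa using inf_le_right
  | cons i s hi ih =>
    rw [Finset.sum_cons, Finset.sum_cons]
    refine (aux_inf_add_le ha (hf i (Finset.mem_cons_self i s))
      (Finset.sum_nonneg fun j hj => hf j (Finset.mem_cons_of_mem hj))).trans ?_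
    exact add_le_add_right (ih fun j hj => hf j (Finset.mem_cons_of_mem hj)) _

private lemma aux_inf_nsmul (h : a ⊓ b = 0) (ha : 0 ≤ a) (hb : 0 ≤ b) (n : ℕ) :
    a ⊓ n • b = 0 := by
  induction n with
  | zero => simpa using inf_eq_right.2 ha
  | succ n ih =>
    refine le_antisymm ?_ (le_inf ha (nsmul_nonneg hb _))
    calc a ⊓ (n + 1) • b = a ⊓ (n • b + b) := by rw [succ_nsmul]
      _ ≤ a ⊓ (n • b) + a ⊓ b := aux_inf_add_le ha (nsmul_nonneg hb n) hb
      _ ≤ 0 := by rw [ih, h, add_zero]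

private lemma aux_sum_le {ι : Type*} (s : Finset ι) (f : ι → X) (hx : 0 ≤ x)
    (hf0 : ∀ i ∈ s, 0 ≤ f i) (hfx : ∀ i ∈ s, f i ≤ x)
    (hd : ∀ i ∈ s, ∀ j ∈ s, i ≠ j → f i ⊓ f j = 0) : ∑ i ∈ s, f i ≤ x := by
  letI : IsOrderedAddMonoid X :=
    { add_le_add_left := fun a b h c => add_le_add_left h c }
  induction s using Finset.cons_induction with
  | empty => simpa using hx
  | cons i s hi ih =>
    rw [Finset.sum_cons]
    have hs0 : ∀ j ∈ s, 0 ≤ f j := fun j hj => hf0 j (Finset.mem_cons_of_mem hj)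
    have hdisj : f i ⊓ ∑ j ∈ s, f j = 0 := by
      refine le_antisymm ?_ (le_inf (hf0 i (Finset.mem_cons_self i s))
        (Finset.sum_nonneg hs0))
      refine (aux_inf_sum_le s f (hf0 i (Finset.mem_cons_self i s)) hs0).trans ?_
      refine le_of_eq (Finset.sum_eq_zero fun j hj => ?_)
      exact hd i (Finset.mem_cons_self i s) j (Finset.mem_cons_of_mem hj)
        (fun hij => hi (hij ▸ hj))
    have hsum : f i + ∑ j ∈ s, f j = f i ⊔ ∑ j ∈ s, f j := by
      rw [← inf_add_sup (f i) (∑ j ∈ s, f j), hdisj, zero_add]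
    rw [hsum]
    exact sup_le (hfx i (Finset.mem_cons_self i s))
      (ih hs0 (fun j hj => hfx j (Finset.mem_cons_of_mem hj))
        (fun a ha b hb => hd a (Finset.mem_cons_of_mem ha) b (Finset.mem_cons_of_mem hb)))

private lemma aux_posPart_le_abs (a : X) : a⁺ ≤ |a| := by
  rw [posPart_def]
  exact sup_le (le_abs_self a) (abs_nonneg a)

end aux

theorem stmt16 {X : Type*} [Lattice X] [AddCommGroup X] [Module ℝ X]
    [CovariantClass X X (· + ·) (· ≤ ·)] [PosSMulMono ℝ X]
    [TopologicalSpace X] [IsTopologicalAddGroup X] [ContinuousSMul ℝ X]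
    (hsolid : ∀ S ∈ nhds (0 : X), ∃ V ∈ nhds (0 : X), IsSolid V ∧ V ⊆ S)
    {Γ : Type*} (e : Γ → X)
    -- Q = {e_γ} is an orthogonal system of nonzero positive elements
    (hpos : ∀ γ, 0 ≤ e γ) (hne : ∀ γ, e γ ≠ 0)
    (horth : ∀ γ γ', γ ≠ γ' → e γ ⊓ e γ' = 0) :
    -- Q is a topological orthogonal system iff x_{n,H} →τ x for each x ∈ X₊
    Dense {x : X | ∃ (F : Finset Γ) (c : ℝ), 0 ≤ c ∧ |x| ≤ c • ∑ γ ∈ F, e γ} ↔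
    ∀ x : X, 0 ≤ x →
      Filter.Tendsto (fun p : ℕ × Finset Γ => ∑ γ ∈ p.2, x ⊓ (p.1 • e γ))
        Filter.atTop (nhds x) := by
  letI : IsOrderedAddMonoid X :=
    { add_le_add_left := fun a b h c => add_le_add_left h c }
  classical
  set I : Set X := {x : X | ∃ (F : Finset Γ) (c : ℝ), 0 ≤ c ∧ |x| ≤ c • ∑ γ ∈ F, e γ}
    with hI
  have hterm0 : ∀ (x : X), 0 ≤ x → ∀ (n : ℕ) (γ : Γ), 0 ≤ x ⊓ n • e γ :=
    fun x hx n γ => le_inf hx (nsmul_nonneg (hpos γ) n)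
  have hdisjn : ∀ (n : ℕ) (γ γ' : Γ), γ ≠ γ' → (n • e γ) ⊓ (n • e γ') = 0 := by
    intro n γ γ' hγ
    have h1 : e γ' ⊓ n • e γ = 0 := by
      refine aux_inf_nsmul ?_ (hpos γ') (hpos γ) n
      rw [inf_comm]; exact horth γ γ' hγ
    have h2 : (n • e γ) ⊓ e γ' = 0 := by rw [inf_comm]; exact h1
    exact aux_inf_nsmul h2 (nsmul_nonneg (hpos γ) n) (hpos γ') n
  have hbound : ∀ (x : X), 0 ≤ x → ∀ (n : ℕ) (H : Finset Γ),
      ∑ γ ∈ H, x ⊓ n • e γ ≤ x := by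
    intro x hx n H
    refine aux_sum_le H _ hx (fun γ _ => hterm0 x hx n γ) (fun γ _ => inf_le_left) ?_
    intro γ _ γ' _ hγ
    refine le_antisymm ?_ (le_inf (hterm0 x hx n γ) (hterm0 x hx n γ'))
    calc (x ⊓ n • e γ) ⊓ (x ⊓ n • e γ') ≤ (n • e γ) ⊓ (n • e γ') :=
          inf_le_inf inf_le_right inf_le_right
      _ = 0 := hdisjn n γ γ' hγ
  constructor
  · -- density → convergence
    intro hdense x hx
    rw [← tendsto_sub_nhds_zero_iff]
    intro S hS
    rw [Filter.mem_map]
    obtain ⟨V, hV, hVsolid, hVS⟩ := hsolid S hS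
    -- find y ∈ I close to x
    have hxU : {w : X | w - x ∈ V} ∈ nhds x := by
      have hc : ContinuousAt (fun w : X => w - x) x :=
        (continuous_id.sub continuous_const).continuousAt
      have ht : Filter.Tendsto (fun w : X => w - x) (nhds x) (nhds 0) := by
        simpa [ContinuousAt, sub_self] using hc
      exact ht hV
    obtain ⟨y, hyV, F, c, hc, hyI⟩ := mem_closure_iff_nhds.1 (hdense x) _ hxU
    set z : X := y⁺ ⊓ x with hz
    have h0z : 0 ≤ z := le_inf (posPart_nonneg y) hx
    have hzx : z ≤ x := inf_le_right
    -- x - z ∈ V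
    have hxzV : x - z ∈ V := by
      have key : x - z = (x - y⁺)⁺ := by
        rw [hz, sub_eq_add_neg x (y⁺ ⊓ x), neg_inf, add_sup, ← sub_eq_add_neg,
          ← sub_eq_add_neg, sub_self, posPart_def (x - y⁺)]
      have h1 : x - z ≤ |x - y| := by
        rw [key]
        refine (aux_posPart_le_abs _).trans ?_
        have habs : |x⁺ - y⁺| ≤ |x - y| := by
          rw [posPart_def, posPart_def]
          exact abs_sup_sub_sup_le_abs x y 0
        rwa [posPart_eq_self.2 hx] at habs
      have h2 : |x - z| ≤ |y - x| := by
        rw [abs_of_nonneg (sub_nonneg.2 hzx), abs_sub_comm y x]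
        exact h1
      exact hVsolid h2 hyV
    -- z is dominated by the truncated sums
    have hzle : z ≤ c • ∑ γ ∈ F, e γ := by
      calc z ≤ y⁺ := inf_le_left
        _ ≤ |y| := aux_posPart_le_abs y
        _ ≤ c • ∑ γ ∈ F, e γ := hyI
    refine Filter.mem_of_superset (Filter.mem_atTop (⌈c⌉₊, F)) ?_
    rintro ⟨n, H⟩ hp
    obtain ⟨hn, hH⟩ : ⌈c⌉₊ ≤ n ∧ F ≤ H := hp
    have hcle : c ≤ (n : ℝ) := (Nat.le_ceil c).trans (Nat.cast_le.2 hn)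
    have hcn : ∀ γ : Γ, c • e γ ≤ n • e γ := by
      intro γ
      rw [← Nat.cast_smul_eq_nsmul ℝ n (e γ)]
      have h1 : 0 ≤ ((n : ℝ) - c) • e γ :=
        smul_nonneg (sub_nonneg.2 hcle) (hpos γ)
      calc c • e γ ≤ c • e γ + ((n : ℝ) - c) • e γ := le_add_of_nonneg_right h1
        _ = (n : ℝ) • e γ := by rw [← add_smul, add_sub_cancel]
    have hzsum : z ≤ ∑ γ ∈ H, x ⊓ n • e γ :=
      calc z = z ⊓ (c • ∑ γ ∈ F, e γ) := (inf_eq_left.2 hzle).symm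
        _ = z ⊓ ∑ γ ∈ F, c • e γ := by rw [Finset.smul_sum]
        _ ≤ ∑ γ ∈ F, z ⊓ (c • e γ) :=
            aux_inf_sum_le F _ h0z (fun γ _ => smul_nonneg hc (hpos γ))
        _ ≤ ∑ γ ∈ F, x ⊓ (n • e γ) :=
            Finset.sum_le_sum fun γ _ => inf_le_inf hzx (hcn γ)
        _ ≤ ∑ γ ∈ H, x ⊓ (n • e γ) :=
            Finset.sum_le_sum_of_subset_of_nonneg hH (fun γ _ _ => hterm0 x hx n γ)
    have hsum_le : ∑ γ ∈ H, x ⊓ n • e γ ≤ x := hbound x hx n H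
    have hle : |(∑ γ ∈ H, x ⊓ n • e γ) - x| ≤ |x - z| := by
      rw [abs_sub_comm, abs_of_nonneg (sub_nonneg.2 hsum_le),
        abs_of_nonneg (sub_nonneg.2 hzx)]
      exact sub_le_sub_left hzsum x
    exact hVS (hVsolid hle hxzV)
  · -- convergence → density
    intro h
    have hmem : ∀ w : X, 0 ≤ w → w ∈ closure I := by
      intro w hw
      refine mem_closure_of_tendsto (h w hw) (Filter.Eventually.of_forall ?_)
      rintro ⟨n, H⟩
      refine ⟨H, (n : ℝ), Nat.cast_nonneg n, ?_⟩
      rw [abs_of_nonneg (Finset.sum_nonneg fun γ _ => hterm0 w hw n γ)]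
      calc ∑ γ ∈ H, w ⊓ n • e γ ≤ ∑ γ ∈ H, (n : ℝ) • e γ := by
            refine Finset.sum_le_sum fun γ _ => ?_
            rw [Nat.cast_smul_eq_nsmul]
            exact inf_le_right
        _ = (n : ℝ) • ∑ γ ∈ H, e γ := (Finset.smul_sum).symm
    -- I is an additive subgroup
    let G : AddSubgroup X :=
      { carrier := I
        zero_mem' := ⟨∅, 0, le_refl 0, by simp⟩
        add_mem' := by
          rintro a b ⟨F, c, hc, ha⟩ ⟨F', c', hc', hb⟩
          refine ⟨F ∪ F', c + c', add_nonneg hc hc', ?_⟩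
          have hFs : c • ∑ γ ∈ F, e γ ≤ c • ∑ γ ∈ F ∪ F', e γ :=
            smul_le_smul_of_nonneg_left (Finset.sum_le_sum_of_subset_of_nonneg
              Finset.subset_union_left (fun γ _ _ => hpos γ)) hc
          have hFs' : c' • ∑ γ ∈ F', e γ ≤ c' • ∑ γ ∈ F ∪ F', e γ :=
            smul_le_smul_of_nonneg_left (Finset.sum_le_sum_of_subset_of_nonneg
              Finset.subset_union_right (fun γ _ _ => hpos γ)) hc'
          calc |a + b| ≤ |a| + |b| := abs_add_le a b
            _ ≤ c • ∑ γ ∈ F ∪ F', e γ + c' • ∑ γ ∈ F ∪ F', e γ :=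
                add_le_add (ha.trans hFs) (hb.trans hFs')
            _ = (c + c') • ∑ γ ∈ F ∪ F', e γ := (add_smul c c' _).symm
        neg_mem' := by
          rintro a ⟨F, c, hc, ha⟩
          exact ⟨F, c, hc, by rwa [abs_neg]⟩ }
    intro v
    have h1 : (v⁺ : X) ∈ G.topologicalClosure := hmem _ (posPart_nonneg v)
    have h2 : (v⁻ : X) ∈ G.topologicalClosure := hmem _ (negPart_nonneg v)
    have h3 := sub_mem h1 h2
    rw [posPart_sub_negPart] at h3
    exact h3
end

section
/- Let (X,τ) be a locally solid vector lattice with the σ-Lebesgue property. Then every weak unit of X is a quasi-interior point. -/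
theorem stmt18 {X : Type*} [Lattice X] [AddCommGroup X] [Module ℝ X]
    [CovariantClass X X (· + ·) (· ≤ ·)] [PosSMulMono ℝ X]
    [TopologicalSpace X] [IsTopologicalAddGroup X] [ContinuousSMul ℝ X]
    (hsolid : ∀ S ∈ nhds (0 : X), ∃ V ∈ nhds (0 : X), IsSolid V ∧ V ⊆ S)
    -- the σ-Lebesgue property: x_n ↓ 0 implies x_n →τ 0
    (hσLeb : ∀ y : ℕ → X, (∀ n, y (n + 1) ≤ y n) → IsGLB (Set.range y) 0 →
      Filter.Tendsto y Filter.atTop (nhds 0))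
    -- e is a weak unit
    (e : X) (hpos : 0 ≤ e) (hne : e ≠ 0)
    (hweak : ∀ x : X, 0 ≤ x → IsLUB (Set.range fun n : ℕ => x ⊓ (n • e)) x) :
    -- e is a quasi-interior point
    Dense {x : X | ∃ c : ℝ, 0 ≤ c ∧ |x| ≤ c • e} := by
  intro x
  -- truncation sequence
  set z : ℕ → X := fun n => (x ⊓ n • e) ⊔ (-(n • e)) with hz
  -- the error sequence
  set y : ℕ → X := fun n => |x| - |x| ⊓ n • e with hy
  have hsmul_nonneg : ∀ n : ℕ, (0 : X) ≤ n • e := fun n => nsmul_nonneg hpos n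
  have hsmul_mono : ∀ n : ℕ, (n : ℕ) • e ≤ (n + 1) • e := by
    intro n
    exact nsmul_le_nsmul_left hpos (Nat.le_succ n)
  -- each z n lies in the principal ideal of e
  have hzmem : ∀ n, z n ∈ {x : X | ∃ c : ℝ, 0 ≤ c ∧ |x| ≤ c • e} := by
    intro n
    refine ⟨(n : ℝ), Nat.cast_nonneg n, ?_⟩
    rw [Nat.cast_smul_eq_nsmul]
    refine abs_le'.2 ⟨sup_le (inf_le_right) (neg_le_self (hsmul_nonneg n)), neg_le.mp le_sup_right⟩
  -- key inequality : |z n - x| ≤ y n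
  have hkey : ∀ n, |z n - x| ≤ y n := by
    intro n
    set a := n • e with ha
    have hya : y n = 0 ⊔ (|x| - a) := by
      rw [hy]; simp only [sub_inf, sub_self]; rfl
    rw [hya]
    refine abs_le'.2 ⟨?_, ?_⟩
    · -- z n - x ≤ 0 ⊔ (|x| - a)
      have : z n - x = ((x ⊓ a) - x) ⊔ (-a - x) := by
        rw [hz]; simp only [sup_sub]; rfl
      rw [this]
      refine sup_le ?_ ?_
      · exact le_sup_of_le_left (sub_nonpos.2 inf_le_left)
      · refine le_sup_of_le_right ?_
        have : -x ≤ |x| := neg_le_abs x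
        calc -a - x = -x - a := by abel
          _ ≤ |x| - a := sub_le_sub_right this a
    · -- x - z n ≤ 0 ⊔ (|x| - a)
      rw [neg_sub]
      have : x - z n = (x - (x ⊓ a)) ⊓ (x - (-a)) := by
        rw [hz]; simp only [sub_sup]; rfl
      rw [this]
      have h1 : x - (x ⊓ a) = 0 ⊔ (x - a) := by
        simp only [sub_inf, sub_self]
      calc (x - (x ⊓ a)) ⊓ (x - (-a)) ≤ x - (x ⊓ a) := inf_le_left
        _ = 0 ⊔ (x - a) := h1
        _ ≤ 0 ⊔ (|x| - a) := sup_le_sup_left (sub_le_sub_right (le_abs_self x) a) 0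
  -- y is antitone and has infimum 0
  have hmono : ∀ n, y (n + 1) ≤ y n := by
    intro n
    exact sub_le_sub_left (inf_le_inf_left _ (hsmul_mono n)) _
  have hglb : IsGLB (Set.range y) 0 := by
    constructor
    · rintro _ ⟨n, rfl⟩
      exact sub_nonneg.2 inf_le_left
    · intro b hb
      have hub : |x| ≤ |x| - b := by
        refine (hweak |x| (abs_nonneg x)).2 ?_
        rintro _ ⟨n, rfl⟩
        have := hb ⟨n, rfl⟩
        simp only [hy] at this
        show |x| ⊓ n • e ≤ |x| - b
        have h2 := le_sub_iff_add_le.1 this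
        rw [add_comm] at h2
        exact le_sub_iff_add_le.2 h2
      exact (le_sub_self_iff |x|).1 hub
  have hyt : Filter.Tendsto y Filter.atTop (nhds 0) := hσLeb y hmono hglb
  -- z tends to x
  have hzt : Filter.Tendsto z Filter.atTop (nhds x) := by
    have h0 : Filter.Tendsto (fun n => z n - x) Filter.atTop (nhds 0) := by
      intro S hS
      rcases hsolid S hS with ⟨V, hV, hVsolid, hVS⟩
      have := hyt hV
      simp only [Filter.mem_map, Filter.mem_atTop_sets] at this ⊢
      rcases this with ⟨N, hN⟩
      refine ⟨N, fun n hn => ?_⟩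
      have hyV : y n ∈ V := hN n hn
      have habs : |z n - x| ≤ |y n| := (hkey n).trans (le_abs_self _)
      exact hVS (hVsolid habs hyV)
    have := h0.add_const x
    simpa using this
  exact mem_closure_of_tendsto hzt (Filter.Eventually.of_forall hzmem)
end

section
/- Let (X,τ) be a locally solid vector lattice and Q = {e_γ}_{γ∈Γ} a topological orthogonal system of (X,τ). Then a net x_α uτ-converges to 0 if and only if |x_α| ∧ e_γ →τ 0 for every γ ∈ Γ. In particular, if e is a quasi-interior point, then x_α uτ-converges to 0 if and only if |x_α| ∧ e →τ 0. -/
set_option linter.unusedSectionVars false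

section aux
variable {X : Type*} [Lattice X] [AddCommGroup X] [CovariantClass X X (· + ·) (· ≤ ·)]

lemma myinf_add_le {a b c : X} (ha : 0 ≤ a) (hb : 0 ≤ b) (hc : 0 ≤ c) :
    a ⊓ (b + c) ≤ a ⊓ b + a ⊓ c := by
  have h1 : a ⊓ (b + c) ≤ a ⊓ b + c := by
    calc a ⊓ (b + c) ≤ (a + c) ⊓ (b + c) :=
          inf_le_inf_right _ (le_add_of_nonneg_right hc)
      _ = a ⊓ b + c := (inf_add a b c).symm
  have h2 : a ⊓ (b + c) ≤ a ⊓ b + a :=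
    le_trans inf_le_left (le_add_of_nonneg_left (le_inf ha hb))
  calc a ⊓ (b + c) ≤ (a ⊓ b + a) ⊓ (a ⊓ b + c) := le_inf h2 h1
    _ = a ⊓ b + a ⊓ c := (add_inf a c (a ⊓ b)).symm

lemma mysum_nonneg {Γ : Type*} (F : Finset Γ) (b : Γ → X) (hb : ∀ γ, 0 ≤ b γ) :
    0 ≤ ∑ γ ∈ F, b γ := by
  classical
  induction F using Finset.induction_on with
  | empty => simp
  | @insert i s hi ih => rw [Finset.sum_insert hi]; exact add_nonneg (hb i) ih

lemma mysum_le_sum {Γ : Type*} (F : Finset Γ) {f g : Γ → X} (h : ∀ γ ∈ F, f γ ≤ g γ) :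
    ∑ γ ∈ F, f γ ≤ ∑ γ ∈ F, g γ := by
  classical
  induction F using Finset.induction_on with
  | empty => simp
  | @insert i s hi ih =>
    rw [Finset.sum_insert hi, Finset.sum_insert hi]
    exact add_le_add (h i (Finset.mem_insert_self i s))
      (ih fun γ hγ => h γ (Finset.mem_insert_of_mem hγ))

lemma myinf_sum_le {Γ : Type*} (F : Finset Γ) (a : X) (b : Γ → X)
    (ha : 0 ≤ a) (hb : ∀ γ, 0 ≤ b γ) :
    a ⊓ (∑ γ ∈ F, b γ) ≤ ∑ γ ∈ F, a ⊓ b γ := by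
  classical
  induction F using Finset.induction_on with
  | empty => simp
  | @insert i s hi ih =>
    rw [Finset.sum_insert hi, Finset.sum_insert hi]
    exact le_trans (myinf_add_le ha (hb i) (mysum_nonneg s b hb))
      (add_le_add le_rfl ih)

variable [Module ℝ X] [PosSMulMono ℝ X]

lemma mysmul_nonneg {c : ℝ} {a : X} (hc : 0 ≤ c) (ha : 0 ≤ a) : 0 ≤ c • a := by
  simpa using smul_le_smul_of_nonneg_left ha hc

lemma mysmul_mono {c c' : ℝ} {a : X} (hc : c ≤ c') (ha : 0 ≤ a) : c • a ≤ c' • a := by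
  have : 0 ≤ (c' - c) • a := mysmul_nonneg (by linarith) ha
  rw [sub_smul, sub_nonneg] at this
  exact this

lemma myle_smul {c : ℝ} {a : X} (hc : 1 ≤ c) (ha : 0 ≤ a) : a ≤ c • a := by
  simpa using mysmul_mono hc ha

lemma mysmul_inf {c : ℝ} (hc : 0 < c) (a b : X) : (c • a) ⊓ (c • b) ≤ c • (a ⊓ b) := by
  have h1 : c⁻¹ • ((c • a) ⊓ (c • b)) ≤ a ⊓ b := by
    refine le_inf ?_ ?_
    · have := smul_le_smul_of_nonneg_left (inf_le_left (a := c • a) (b := c • b))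
        (inv_nonneg.mpr hc.le)
      rwa [inv_smul_smul₀ hc.ne'] at this
    · have := smul_le_smul_of_nonneg_left (inf_le_right (a := c • a) (b := c • b))
        (inv_nonneg.mpr hc.le)
      rwa [inv_smul_smul₀ hc.ne'] at this
  have := smul_le_smul_of_nonneg_left h1 hc.le
  rwa [smul_inv_smul₀ hc.ne'] at this
end aux

open Filter

lemma key {X : Type*} [Lattice X] [AddCommGroup X] [Module ℝ X]
    [CovariantClass X X (· + ·) (· ≤ ·)] [PosSMulMono ℝ X]
    [TopologicalSpace X] [IsTopologicalAddGroup X] [ContinuousSMul ℝ X]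
    (hsolid : ∀ S ∈ nhds (0 : X), ∃ V ∈ nhds (0 : X), IsSolid V ∧ V ⊆ S)
    {ι : Type*} (l : Filter ι) (x : ι → X)
    {Γ : Type*} (e : Γ → X) (he0 : ∀ γ, 0 ≤ e γ)
    (hD : Dense {z : X | ∃ (F : Finset Γ) (c : ℝ), 0 ≤ c ∧ |z| ≤ c • ∑ γ ∈ F, e γ})
    (h : ∀ γ, Tendsto (fun α => |x α| ⊓ e γ) l (nhds 0)) :
    ∀ u : X, 0 ≤ u → Tendsto (fun α => |x α| ⊓ u) l (nhds 0) := by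
  intro u hu
  rw [tendsto_def]
  intro S hS
  obtain ⟨V, hVmem, hVsolid, hVS⟩ := hsolid S hS
  obtain ⟨V₁, hV₁mem, hV₁half⟩ := exists_nhds_zero_half hVmem
  obtain ⟨W, hWmem, hWsolid, hWV₁⟩ := hsolid V₁ hV₁mem
  -- find z in the dense ideal close to u
  have hnbd : (fun y => y - u) ⁻¹' W ∈ nhds u := by
    have hcont : Tendsto (fun y : X => y - u) (nhds u) (nhds 0) := by
      have := (continuous_sub_right u).tendsto u
      rwa [sub_self] at this
    exact hcont hWmem
  obtain ⟨z, hzW, hzD⟩ := mem_closure_iff_nhds.mp (hD u) _ hnbd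
  obtain ⟨F, c, hc, hz⟩ := hzD
  have hzW : z - u ∈ W := hzW
  set c' : ℝ := max c 1 with hc'def
  have hc1 : (1:ℝ) ≤ c' := le_max_right _ _
  have hc0 : (0:ℝ) < c' := lt_of_lt_of_le one_pos hc1
  have hsum0 : 0 ≤ ∑ γ ∈ F, e γ := mysum_nonneg F e he0
  have hz' : |z| ≤ c' • ∑ γ ∈ F, e γ :=
    le_trans hz (mysmul_mono (le_max_left _ _) hsum0)
  -- the dominating sequence
  set g : ι → X := fun α => c' • ∑ γ ∈ F, (|x α| ⊓ e γ) with hgdef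
  have hg0 : Tendsto g l (nhds 0) := by
    have hsum : Tendsto (fun α => ∑ γ ∈ F, (|x α| ⊓ e γ)) l (nhds 0) := by
      have := tendsto_finset_sum F (fun γ _ => h γ)
      simpa using this
    have := hsum.const_smul c'
    simpa using this
  -- bound |x α| ⊓ |z| by g α
  have hbound : ∀ α, |x α| ⊓ |z| ≤ g α := by
    intro α
    calc |x α| ⊓ |z| ≤ |x α| ⊓ (c' • ∑ γ ∈ F, e γ) := inf_le_inf_left _ hz'
      _ = |x α| ⊓ ∑ γ ∈ F, c' • e γ := by rw [Finset.smul_sum]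
      _ ≤ ∑ γ ∈ F, (|x α| ⊓ (c' • e γ)) :=
          myinf_sum_le F _ _ (abs_nonneg _) (fun γ => mysmul_nonneg hc0.le (he0 γ))
      _ ≤ ∑ γ ∈ F, c' • (|x α| ⊓ e γ) := by
          refine mysum_le_sum F fun γ _ => ?_
          calc |x α| ⊓ (c' • e γ) ≤ (c' • |x α|) ⊓ (c' • e γ) :=
                inf_le_inf_right _ (myle_smul hc1 (abs_nonneg _))
            _ ≤ c' • (|x α| ⊓ e γ) := mysmul_inf hc0 _ _
      _ = g α := (Finset.smul_sum).symm
  -- eventually g α ∈ W hence |x α| ⊓ |z| ∈ W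
  have hgW : ∀ᶠ α in l, g α ∈ W := hg0.eventually_mem hWmem
  suffices hev : ∀ᶠ α in l, |x α| ⊓ u ∈ S from hev
  refine hgW.mono fun α hα => ?_
  -- assemble
  have ha : |x α| ⊓ |z| ∈ W := by
    refine hWsolid ?_ hα
    have h1 : (0:X) ≤ |x α| ⊓ |z| := le_inf (abs_nonneg _) (abs_nonneg _)
    have h2 : (0:X) ≤ g α := le_trans h1 (hbound α)
    rw [abs_of_nonneg h1, abs_of_nonneg h2]
    exact hbound α
  have hb : |x α| ⊓ |u - z| ∈ W := by
    refine hWsolid ?_ hzW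
    have h1 : (0:X) ≤ |x α| ⊓ |u - z| := le_inf (abs_nonneg _) (abs_nonneg _)
    rw [abs_of_nonneg h1, abs_sub_comm u z]
    exact inf_le_right
  have hsum : |x α| ⊓ |z| + |x α| ⊓ |u - z| ∈ V :=
    hV₁half _ (hWV₁ ha) _ (hWV₁ hb)
  refine hVS (hVsolid ?_ hsum)
  have h1 : (0:X) ≤ |x α| ⊓ u := le_inf (abs_nonneg _) hu
  have hle : |x α| ⊓ u ≤ |x α| ⊓ |z| + |x α| ⊓ |u - z| := by
    have hu' : u ≤ |z| + |u - z| := by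
      have h1 : u ≤ z + |u - z| := sub_le_iff_le_add'.mp (le_abs_self (u - z))
      exact h1.trans (add_le_add (le_abs_self z) le_rfl)
    calc |x α| ⊓ u ≤ |x α| ⊓ (|z| + |u - z|) := inf_le_inf_left _ hu'
      _ ≤ |x α| ⊓ |z| + |x α| ⊓ |u - z| :=
          myinf_add_le (abs_nonneg _) (abs_nonneg _) (abs_nonneg _)
  have h2 : (0:X) ≤ |x α| ⊓ |z| + |x α| ⊓ |u - z| :=
    add_nonneg (le_inf (abs_nonneg _) (abs_nonneg _)) (le_inf (abs_nonneg _) (abs_nonneg _))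
  rw [abs_of_nonneg h1, abs_of_nonneg h2]
  exact hle


theorem stmt19 {X : Type*} [Lattice X] [AddCommGroup X] [Module ℝ X]
    [CovariantClass X X (· + ·) (· ≤ ·)] [PosSMulMono ℝ X]
    [TopologicalSpace X] [IsTopologicalAddGroup X] [ContinuousSMul ℝ X]
    (hsolid : ∀ S ∈ nhds (0 : X), ∃ V ∈ nhds (0 : X), IsSolid V ∧ V ⊆ S)
    {ι : Type*} (l : Filter ι) (x : ι → X) :
    -- for a topological orthogonal system Q = {e_γ}:
    -- x_α →uτ 0 iff |x_α| ⊓ e_γ →τ 0 for all γ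
    (∀ {Γ : Type*} (e : Γ → X), (∀ γ, 0 ≤ e γ) → (∀ γ, e γ ≠ 0) →
      (∀ γ γ', γ ≠ γ' → e γ ⊓ e γ' = 0) →
      Dense {z : X | ∃ (F : Finset Γ) (c : ℝ), 0 ≤ c ∧ |z| ≤ c • ∑ γ ∈ F, e γ} →
      ((∀ u : X, 0 ≤ u → Filter.Tendsto (fun α => |x α| ⊓ u) l (nhds 0)) ↔
        ∀ γ, Filter.Tendsto (fun α => |x α| ⊓ e γ) l (nhds 0)))
    ∧
    -- in particular, for a quasi-interior point e:
    -- x_α →uτ 0 iff |x_α| ⊓ e →τ 0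
    (∀ e : X, 0 ≤ e → e ≠ 0 → Dense {z : X | ∃ c : ℝ, 0 ≤ c ∧ |z| ≤ c • e} →
      ((∀ u : X, 0 ≤ u → Filter.Tendsto (fun α => |x α| ⊓ u) l (nhds 0)) ↔
        Filter.Tendsto (fun α => |x α| ⊓ e) l (nhds 0))) := by
  constructor
  · intro Γ e he0 _ _ hD
    exact ⟨fun h γ => h (e γ) (he0 γ), fun h => key hsolid l x e he0 hD h⟩
  · intro e he0 _ hD
    refine ⟨fun h => h e he0, fun h => ?_⟩
    have hD' : Dense {z : X | ∃ (F : Finset Unit) (c : ℝ),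
        0 ≤ c ∧ |z| ≤ c • ∑ _γ ∈ F, e} := by
      refine hD.mono fun z hz => ?_
      obtain ⟨c, hc, hzc⟩ := hz
      exact ⟨{Unit.unit}, c, hc, by simpa using hzc⟩
    exact key hsolid l x (fun _ : Unit => e) (fun _ => he0) hD' (fun _ => h)
end
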